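/- arXiv:2408.08128 — 7 statements merged into one kernel-verified Lean document; each statement's English description precedes it below -/
import Mathlib

section
/- Let G be a 3-connected, cubic, bipartite graph with a non-trivial tight cut ∂X. If G1 and G2 are the two tight cut contractions associated with ∂X, then G is a star product of G1 and G2, namely G is isomorphic to (G1,c1)*(G2,c2) where c1 and c2 are the respective contraction vertices. -/
open SimpleGraph

/-- A graph is cubic if every vertex has degree 3. -/
def IsCubic {V : Type*} (G : SimpleGraph V) : Prop :=
  ∀ v : V, (G.neighborSet v).ncard = 3

/-- A 2-factor of `G` is a 2-regular spanning subgraph of `G`. -/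
def IsTwoFactor {V : Type*} (G : SimpleGraph V) (H : G.Subgraph) : Prop :=
  H.IsSpanning ∧ ∀ v : V, (H.neighborSet v).ncard = 2

/-- A graph is 2-factor Hamiltonian if every 2-factor of it is a Hamiltonian cycle,
i.e. a connected 2-regular spanning subgraph. -/
def IsTwoFactorHamiltonian {V : Type*} (G : SimpleGraph V) : Prop :=
  ∀ H : G.Subgraph, IsTwoFactor G H → H.Connected

/-- A brace is a connected bipartite graph on at least four vertices in which every
matching of size at most two is contained in a perfect matching. -/
def IsBrace {V : Type*} (G : SimpleGraph V) : Prop :=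
  G.Connected ∧ G.Colorable 2 ∧ 4 ≤ Nat.card V ∧
    ∀ M : G.Subgraph, M.IsMatching → M.edgeSet.ncard ≤ 2 →
      ∃ P : G.Subgraph, M ≤ P ∧ P.IsPerfectMatching

/-- The Heawood graph, as the point-line incidence graph of the Fano plane:
points and lines are indexed by `Fin 7`, and point `p` lies on line `l` iff
`p + l ∈ {0, 1, 3}` (mod 7), `{0,1,3}` being a planar difference set mod 7. -/
def heawoodGraph : SimpleGraph (Fin 7 ⊕ Fin 7) :=
  SimpleGraph.fromRel fun a b => ∃ p l : Fin 7,
    a = Sum.inl p ∧ b = Sum.inr l ∧ (p + l = 0 ∨ p + l = 1 ∨ p + l = 3)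

/-- A cycle (given as a closed walk) alternates between edges of the subgraph `M`
and edges not in `M`; the wrap-around pair is included by appending the first edge. -/
def IsAlternatingCycle {V : Type*} {G : SimpleGraph V} (M : G.Subgraph) {v : V}
    (p : G.Walk v v) : Prop :=
  p.IsCycle ∧
    List.Chain' (fun e f => e ∈ M.edgeSet ↔ f ∉ M.edgeSet) (p.edges ++ p.edges.take 1)

/-- `σ` is a Pfaffian orientation of `G`: it orients every edge (exactly one direction),
and for every perfect matching `M` and every `M`-alternating cycle, the number of
its edges oriented in agreement with the direction of traversal is odd. -/
def IsPfaffianOrientation {V : Type*} (G : SimpleGraph V) (σ : V → V → Bool) : Prop :=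
  (∀ u v : V, G.Adj u v → σ u v = !σ v u) ∧
  ∀ M : G.Subgraph, M.IsPerfectMatching →
    ∀ (v : V) (p : G.Walk v v), IsAlternatingCycle M p →
      Odd (p.darts.filter fun d => σ d.toProd.1 d.toProd.2).length

/-- A graph with a perfect matching is Pfaffian if it admits a Pfaffian orientation. -/
def IsPfaffian {V : Type*} (G : SimpleGraph V) : Prop :=
  (∃ M : G.Subgraph, M.IsPerfectMatching) ∧ ∃ σ : V → V → Bool, IsPfaffianOrientation G σ

/-- The cut `∂X`: the set of edges of `G` with exactly one endpoint in `X`. -/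
def edgeCut {V : Type*} (G : SimpleGraph V) (X : Set V) : Set (Sym2 V) :=
  {e | e ∈ G.edgeSet ∧ ∃ u w : V, e = s(u, w) ∧ u ∈ X ∧ w ∉ X}

/-- A cut `∂X` is tight if every perfect matching contains exactly one of its edges. -/
def IsTightCut {V : Type*} (G : SimpleGraph V) (X : Set V) : Prop :=
  ∀ M : G.Subgraph, M.IsPerfectMatching → (edgeCut G X ∩ M.edgeSet).ncard = 1

/-- A cut `∂X` is trivial if `|X| = 1` or `|V(G) \ X| = 1`. -/
def IsTrivialCut {V : Type*} (X : Set V) : Prop :=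
  X.ncard = 1 ∨ (Xᶜ : Set V).ncard = 1

/-- The tight cut contraction keeping `X`: contract `V(G) \ X` into a single vertex
(`Sum.inr ()`), deleting loops and parallel edges. -/
def contractOutside {V : Type*} (G : SimpleGraph V) (X : Set V) :
    SimpleGraph (↥X ⊕ Unit) :=
  SimpleGraph.fromRel fun a b =>
    (∃ u v : X, a = Sum.inl u ∧ b = Sum.inl v ∧ G.Adj u v) ∨
    (∃ (u : X) (w : V), w ∉ X ∧ a = Sum.inl u ∧ b = Sum.inr () ∧ G.Adj u w)

/-- A graph is `k`-connected if it has more than `k` vertices and deleting any set of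
fewer than `k` vertices leaves it connected. -/
def IsKConnected {V : Type*} (k : ℕ) (G : SimpleGraph V) : Prop :=
  k < Nat.card V ∧ ∀ S : Set V, S.ncard < k → (G.induce (Sᶜ : Set V)).Connected

/-- A graph is matching covered if it is connected, has an edge, and every edge
lies in a perfect matching. -/
def IsMatchingCovered {V : Type*} (G : SimpleGraph V) : Prop :=
  G.Connected ∧ G.edgeSet.Nonempty ∧
    ∀ e ∈ G.edgeSet, ∃ M : G.Subgraph, M.IsPerfectMatching ∧ e ∈ M.edgeSet

/-- A graph is bridgeless if no edge is a bridge. -/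
def Bridgeless {V : Type*} (G : SimpleGraph V) : Prop :=
  ∀ e : Sym2 V, ¬ G.IsBridge e

/-- `(A, B)` is a bipartition of `G` into the two colour classes `A` and `B`. -/
def IsBipartition {V : Type*} (G : SimpleGraph V) (A B : Set V) : Prop :=
  A ∪ B = Set.univ ∧ Disjoint A B ∧
    ∀ u v : V, G.Adj u v → ((u ∈ A ∧ v ∈ B) ∨ (u ∈ B ∧ v ∈ A))

/-- `G` is the star product `(G1,v1)*(G2,v2)`, witnessed by the embeddings `f` of
`G1 - v1` and `g` of `G2 - v2` into `G`, and the bijection `m` matching the three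
neighbours of `v1` to the three neighbours of `v2`: `v1` and `v2` have degree 3,
the images of `f` and `g` partition the vertices of `G`, and the edges of `G` are
exactly the edges of `G1 - v1`, the edges of `G2 - v2`, and the three matching edges
`f x — g (m x)` for `x` a neighbour of `v1`. -/
def IsStarProductWitness {V V1 V2 : Type*} (G : SimpleGraph V)
    (G1 : SimpleGraph V1) (v1 : V1) (G2 : SimpleGraph V2) (v2 : V2)
    (f : V1 → V) (g : V2 → V) (m : V1 → V2) : Prop :=
  (G1.neighborSet v1).ncard = 3 ∧ (G2.neighborSet v2).ncard = 3 ∧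
  Set.InjOn f {x | x ≠ v1} ∧ Set.InjOn g {y | y ≠ v2} ∧
  (∀ x y, x ≠ v1 → y ≠ v2 → f x ≠ g y) ∧
  (∀ v : V, (∃ x, x ≠ v1 ∧ f x = v) ∨ (∃ y, y ≠ v2 ∧ g y = v)) ∧
  Set.BijOn m (G1.neighborSet v1) (G2.neighborSet v2) ∧
  (∀ a b : V, G.Adj a b ↔
    ((∃ x y, x ≠ v1 ∧ y ≠ v1 ∧ G1.Adj x y ∧ a = f x ∧ b = f y) ∨
     (∃ x y, x ≠ v2 ∧ y ≠ v2 ∧ G2.Adj x y ∧ a = g x ∧ b = g y) ∨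
     (∃ x, G1.Adj v1 x ∧ ((a = f x ∧ b = g (m x)) ∨ (b = f x ∧ a = g (m x))))))

/-- `G` is a star product `(G1,v1)*(G2,v2)`. -/
def IsStarProduct {V V1 V2 : Type*} (G : SimpleGraph V)
    (G1 : SimpleGraph V1) (v1 : V1) (G2 : SimpleGraph V2) (v2 : V2) : Prop :=
  ∃ (f : V1 → V) (g : V2 → V) (m : V1 → V2),
    IsStarProductWitness G G1 v1 G2 v2 f g m

/-- The principal 3-edge cut of a star product: the three added matching edges. -/
def principalCut {V V1 V2 : Type*} (G1 : SimpleGraph V1) (v1 : V1)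
    (f : V1 → V) (g : V2 → V) (m : V1 → V2) : Set (Sym2 V) :=
  {e | ∃ x, G1.Adj v1 x ∧ e = s(f x, g (m x))}

/-!
Every edge of a regular bipartite graph lies in a perfect matching (apply Hall's theorem after
deleting the other edges at one of its ends). Colour `G` by classes `A` and `Aᶜ`. A perfect
matching crosses the tight cut `∂X` exactly once, so `|X ∩ A|` and `|X ∩ Aᶜ|` differ by one,
the larger being the class of the `X`-end of the crossing edge. As every cut edge lies in a
perfect matching, all cut edges leave `X` from the same class, say `A`, and counting the edges
at `X ∩ A` and at `X ∩ Aᶜ` in the cubic graph gives `|∂X| = 3 (|X ∩ A| - |X ∩ Aᶜ|) = 3`.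
Now `|X|` is odd and not `1`, so `|X| ≥ 3`, and likewise `|Xᶜ| ≥ 3`; by 3-connectivity the three
cut edges have distinct ends on both sides. A cut made of three disjoint edges is exactly the
star product of its two contractions.
-/

open Finset

namespace SimpleGraph

variable {V : Type*} {G : SimpleGraph V}

lemma Colorable.exists_mem_isBipartiteWith_compl (h : G.Colorable 2) (u : V) :
    ∃ A : Set V, u ∈ A ∧ G.IsBipartiteWith A Aᶜ := by
  obtain ⟨c⟩ := h
  refine ⟨{x | c x = c u}, rfl, disjoint_compl_right, fun x y hxy => ?_⟩
  have hne := c.valid hxy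
  simp only [Set.mem_ofPred_eq, Set.mem_compl_iff]
  revert hne
  generalize c x = a, c y = b, c u = d
  decide +revert

section Counting

variable [Fintype V] [DecidableRel G.Adj] {k : ℕ}

lemma IsRegularOfDegree.card_interedges_univ (hreg : G.IsRegularOfDegree k) (s : Finset V) :
    #(G.interedges s univ) = k * #s := by
  rw [interedges_def, card_filter, sum_product, mul_comm, ← smul_eq_mul, ← sum_const]
  refine sum_congr rfl fun a _ => ?_
  rw [← hreg a, ← card_neighborFinset_eq_degree, ← card_filter]
  congr 1
  ext b
  simp

lemma IsRegularOfDegree.card_interedges_add_mul_card_inter_eq [DecidableEq V]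
    (hreg : G.IsRegularOfDegree k) {A B : Finset V} (hAB : G.IsBipartiteWith ↑A ↑B)
    (s : Finset V) :
    #(G.interedges (s ∩ A) sᶜ) + k * #(s ∩ B) = #(G.interedges (s ∩ B) sᶜ) + k * #(s ∩ A) := by
  have hside : ∀ {A B : Finset V}, G.IsBipartiteWith ↑A ↑B →
      #(G.interedges (s ∩ A) (s ∩ B)) + #(G.interedges (s ∩ A) sᶜ) = k * #(s ∩ A) := by
    intro A B hAB
    rw [← card_union_of_disjoint (interedges_disjoint_right _ _
      (disjoint_compl_right.mono_left inter_subset_left)), ← hreg.card_interedges_univ]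
    congr 1
    ext ⟨a, b⟩
    simp only [mem_union, mem_interedges_iff, mem_inter, mem_compl, mem_univ, true_and]
    constructor
    · rintro (⟨ha, -, hab⟩ | ⟨ha, -, hab⟩) <;> exact ⟨ha, hab⟩
    · rintro ⟨ha, hab⟩
      by_cases hb : b ∈ s
      · exact .inl ⟨ha, ⟨hb, hAB.mem_of_mem_adj ha.2 hab⟩, hab⟩
      · exact .inr ⟨ha, hb, hab⟩
  have hcomm : #(G.interedges (s ∩ A) (s ∩ B)) = #(G.interedges (s ∩ B) (s ∩ A)) := by
    have := G.symm
    exact Rel.card_interedges_comm _ _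
  have := hside hAB
  have := hside hAB.symm
  omega

lemma card_le_card_biUnion_neighborFinset [DecidableEq V] (hk : 0 < k)
    (hdeg : ∀ v, G.degree v ≤ k) {s : Finset V}
    (hs : k * #s ≤ ∑ a ∈ s, G.degree a + (k - 1)) :
    #s ≤ #(s.biUnion fun a => G.neighborFinset a) := by
  set t := s.biUnion fun a => G.neighborFinset a
  have hsum : ∑ a ∈ s, G.degree a ≤ k * #t :=
    calc ∑ a ∈ s, G.degree a = ∑ a ∈ s, #(bipartiteAbove G.Adj t a) := by
          refine sum_congr rfl fun a ha => ?_
          rw [← card_neighborFinset_eq_degree]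
          congr 1
          ext b
          simp only [mem_bipartiteAbove, mem_neighborFinset, t, mem_biUnion, iff_and_self]
          exact fun hab => ⟨a, ha, hab⟩
      _ = ∑ b ∈ t, #(bipartiteBelow G.Adj s b) :=
          sum_card_bipartiteAbove_eq_sum_card_bipartiteBelow _
      _ ≤ ∑ b ∈ t, G.degree b := sum_le_sum fun b _ => by
          rw [← card_neighborFinset_eq_degree]
          exact card_le_card fun a ha => by simpa using ((mem_bipartiteBelow _).mp ha).2.symm
      _ ≤ ∑ _b ∈ t, k := sum_le_sum fun b _ => hdeg b
      _ = k * #t := by rw [sum_const, smul_eq_mul, mul_comm]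
  have : k * #s < k * (#t + 1) := by rw [mul_add]; omega
  exact Nat.lt_succ_iff.mp (Nat.lt_of_mul_lt_mul_left this)

end Counting

/-- Deleting the edges at `v` other than `uv` forces every perfect matching to contain `uv`. -/
def pinEdge (G : SimpleGraph V) (u v : V) : SimpleGraph V where
  Adj x y := G.Adj x y ∧ (x = v → y = u) ∧ (y = v → x = u)
  symm := ⟨fun _ _ h => ⟨h.1.symm, h.2.2, h.2.1⟩⟩
  loopless := ⟨fun x h => G.loopless.irrefl x h.1⟩

instance [DecidableEq V] [DecidableRel G.Adj] (u v : V) : DecidableRel (G.pinEdge u v).Adj :=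
  fun x y => inferInstanceAs (Decidable (G.Adj x y ∧ (x = v → y = u) ∧ (y = v → x = u)))

lemma pinEdge_le (u v : V) : G.pinEdge u v ≤ G := fun _ _ h => h.1

section PinEdge

variable [Fintype V] [DecidableEq V] [DecidableRel G.Adj] {k : ℕ}

lemma le_degree_pinEdge_add (hreg : G.IsRegularOfDegree k) {u v x : V} (hx : x ≠ v) :
    k ≤ (G.pinEdge u v).degree x + if G.Adj x v ∧ x ≠ u then 1 else 0 := by
  rw [← hreg x, ← card_neighborFinset_eq_degree, ← card_neighborFinset_eq_degree]
  split_ifs with hxv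
  · refine (card_le_card fun y hy => ?_).trans (card_insert_le v _)
    rw [mem_insert, mem_neighborFinset]
    by_cases hy' : y = v
    · exact .inl hy'
    · exact .inr ⟨(G.mem_neighborFinset _ _).mp hy, fun h => absurd h hx, fun h => absurd h hy'⟩
  · refine card_le_card fun y hy => ?_
    have hxy := (G.mem_neighborFinset _ _).mp hy
    refine (mem_neighborFinset _ _ _).mpr ⟨hxy, fun h => absurd h hx, fun hyv => ?_⟩
    subst hyv
    exact not_not.mp fun hxu => hxv ⟨hxy, hxu⟩

/-- The `k - 1` deleted edges all end at `v`, and an independent set contains either `v` or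
none of its neighbours. -/
lemma le_sum_degree_pinEdge (hreg : G.IsRegularOfDegree k) {u v : V} (huv : G.Adj u v)
    {s : Finset V} (hs : ∀ x ∈ s, ∀ y ∈ s, ¬ G.Adj x y) :
    k * #s ≤ ∑ x ∈ s, (G.pinEdge u v).degree x + (k - 1) := by
  by_cases hv : v ∈ s
  · have hrest : ∀ x ∈ s.erase v, k ≤ (G.pinEdge u v).degree x := fun x hx => by
      have := le_degree_pinEdge_add hreg (u := u) (ne_of_mem_erase hx)
      rwa [if_neg fun h => hs x (mem_of_mem_erase hx) v hv h.1, add_zero] at this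
    have hv1 : 1 ≤ (G.pinEdge u v).degree v := by
      rw [← card_neighborFinset_eq_degree]
      exact card_pos.mpr
        ⟨u, (mem_neighborFinset _ _ _).mpr ⟨huv.symm, fun _ => rfl, fun h => h.symm⟩⟩
    have hsum := card_nsmul_le_sum (s.erase v) _ k hrest
    rw [smul_eq_mul] at hsum
    rw [← add_sum_erase s _ hv, ← card_erase_add_one hv, mul_add, mul_one, mul_comm]
    omega
  · have hsum := card_nsmul_le_sum s _ k fun x hx =>
      le_degree_pinEdge_add hreg (u := u) (ne_of_mem_of_not_mem hx hv)
    rw [sum_add_distrib, sum_boole, Nat.cast_id, smul_eq_mul, mul_comm] at hsum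
    have hfilter : #{x ∈ s | G.Adj x v ∧ x ≠ u} ≤ k - 1 := by
      rw [← hreg v, ← card_neighborFinset_eq_degree,
        ← card_erase_of_mem ((G.mem_neighborFinset _ _).mpr huv.symm)]
      refine card_le_card fun x hx => ?_
      rw [mem_filter] at hx
      exact mem_erase.mpr ⟨hx.2.2, (G.mem_neighborFinset _ _).mpr hx.2.1.symm⟩
    omega

end PinEdge

lemma IsBipartiteWith.forall_ncard_le_of_forall_subset [Finite V] {A : Set V}
    (h : G.IsBipartiteWith A Aᶜ)
    (hHall : ∀ s, (s ⊆ A ∨ s ⊆ Aᶜ) → s.ncard ≤ (⋃ x ∈ s, G.neighborSet x).ncard) (s : Set V) :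
    s.ncard ≤ (⋃ x ∈ s, G.neighborSet x).ncard := by
  have hdisj : Disjoint (⋃ x ∈ s ∩ A, G.neighborSet x) (⋃ x ∈ s \ A, G.neighborSet x) := by
    refine Set.disjoint_left.mpr fun y hy hy' => ?_
    obtain ⟨x, hx, hxy⟩ := Set.mem_iUnion₂.mp hy
    obtain ⟨x', hx', hx'y⟩ := Set.mem_iUnion₂.mp hy'
    exact h.mem_of_mem_adj hx.2 hxy (h.symm.mem_of_mem_adj hx'.2 hx'y)
  calc s.ncard = (s ∩ A).ncard + (s \ A).ncard :=
        (Set.ncard_inter_add_ncard_sdiff_eq_ncard s A).symm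
    _ ≤ (⋃ x ∈ s ∩ A, G.neighborSet x).ncard + (⋃ x ∈ s \ A, G.neighborSet x).ncard :=
        add_le_add (hHall _ (.inl Set.inter_subset_right)) (hHall _ (.inr fun _ hx => hx.2))
    _ = ((⋃ x ∈ s ∩ A, G.neighborSet x) ∪ ⋃ x ∈ s \ A, G.neighborSet x).ncard :=
        (Set.ncard_union_eq hdisj).symm
    _ ≤ (⋃ x ∈ s, G.neighborSet x).ncard :=
        Set.ncard_le_ncard (Set.union_subset (Set.biUnion_subset_biUnion_left Set.inter_subset_left)
          (Set.biUnion_subset_biUnion_left Set.sdiff_subset))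

theorem IsRegularOfDegree.exists_isPerfectMatching_adj [Fintype V] [DecidableRel G.Adj] {k : ℕ}
    (hreg : G.IsRegularOfDegree k) (hbip : G.IsBipartite) {u v : V} (huv : G.Adj u v) :
    ∃ M : G.Subgraph, M.IsPerfectMatching ∧ M.Adj u v := by
  classical
  obtain ⟨A, -, hA⟩ := Colorable.exists_mem_isBipartiteWith_compl hbip u
  have hk : 0 < k := hreg u ▸ (G.degree_pos_iff_exists_adj u).mpr ⟨v, huv⟩
  have hHA : (G.pinEdge u v).IsBipartiteWith A Aᶜ := ⟨hA.disjoint, fun x y h => hA.mem_of_adj h.1⟩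
  have hHall : ∀ s : Set V, s.ncard ≤ (⋃ x ∈ s, (G.pinEdge u v).neighborSet x).ncard := by
    refine hHA.forall_ncard_le_of_forall_subset fun s hs => ?_
    have hind : ∀ x ∈ s.toFinset, ∀ y ∈ s.toFinset, ¬ G.Adj x y := by
      simp only [Set.mem_toFinset]
      rcases hs with hs | hs
      · exact fun x hx y hy hxy => hA.mem_of_mem_adj (hs hx) hxy (hs hy)
      · exact fun x hx y hy hxy => hs hy (hA.symm.mem_of_mem_adj (hs hx) hxy)
    calc s.ncard = #s.toFinset := Set.ncard_eq_toFinset_card' s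
      _ ≤ #(s.toFinset.biUnion fun x => (G.pinEdge u v).neighborFinset x) :=
          card_le_card_biUnion_neighborFinset hk
            (fun x => hreg x ▸ degree_le_of_le (pinEdge_le u v))
            (le_sum_degree_pinEdge hreg huv hind)
      _ = (⋃ x ∈ s, (G.pinEdge u v).neighborSet x).ncard := by
          rw [← Set.ncard_coe_finset]
          congr 1
          ext y
          simp
  obtain ⟨M, hM⟩ := exists_isPerfectMatching_of_forall_ncard_le hHA hHall
  obtain ⟨w, hvw, -⟩ := Subgraph.isPerfectMatching_iff.mp hM v
  rw [(M.adj_sub hvw).2.1 rfl] at hvw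
  refine ⟨M.map (Hom.ofLE (pinEdge_le u v)), ⟨hM.1.map_ofLE _, ?_⟩, ?_⟩
  · simpa [Subgraph.IsSpanning] using hM.2
  · simpa using hvw.symm

end SimpleGraph

lemma IsCubic.isRegularOfDegree {V : Type*} [Fintype V] {G : SimpleGraph V} [DecidableRel G.Adj]
    (h : IsCubic G) : G.IsRegularOfDegree 3 := fun v => by
  rw [← card_neighborFinset_eq_degree, neighborFinset_def, ← Set.ncard_eq_toFinset_card']
  exact h v

section TightCut

variable {V : Type*} {G : SimpleGraph V} {X : Set V}

lemma edgeCut_compl : edgeCut G Xᶜ = edgeCut G X := by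
  ext e
  constructor <;> rintro ⟨he, u, w, rfl, hu, hw⟩ <;>
    exact ⟨he, w, u, Sym2.eq_swap, by simpa using hw, by simpa using hu⟩

lemma IsTightCut.compl (h : IsTightCut G X) : IsTightCut G Xᶜ := fun M hM => by
  rw [edgeCut_compl]
  exact h M hM

lemma IsTightCut.exists_adj (h : IsTightCut G X) {M : G.Subgraph} (hM : M.IsPerfectMatching) :
    ∃ u w, u ∈ X ∧ w ∉ X ∧ M.Adj u w := by
  obtain ⟨e, he⟩ := Set.ncard_eq_one.mp (h M hM)
  obtain ⟨⟨-, u, w, rfl, hu, hw⟩, huw⟩ : e ∈ edgeCut G X ∩ M.edgeSet := he ▸ rfl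
  exact ⟨u, w, hu, hw, huw⟩

lemma IsTightCut.mem_of_adj (h : IsTightCut G X) {M : G.Subgraph} (hM : M.IsPerfectMatching)
    {u w x y : V} (hu : u ∈ X) (hw : w ∉ X) (huw : M.Adj u w) (hx : x ∈ X) (hxu : x ≠ u)
    (hxy : M.Adj x y) : y ∈ X := by
  by_contra hy
  obtain ⟨e, he⟩ := Set.ncard_eq_one.mp (h M hM)
  have hcut : ∀ {a b}, a ∈ X → b ∉ X → M.Adj a b → s(a, b) = e := fun ha hb hab => by
    have : s(_, _) ∈ edgeCut G X ∩ M.edgeSet := ⟨⟨M.adj_sub hab, _, _, rfl, ha, hb⟩, hab⟩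
    rwa [he, Set.mem_singleton_iff] at this
  rcases Sym2.eq_iff.mp ((hcut hu hw huw).trans (hcut hx hy hxy).symm) with ⟨hux, -⟩ | ⟨huy, -⟩
  · exact hxu hux.symm
  · exact hy (huy ▸ hu)

lemma SimpleGraph.Subgraph.IsPerfectMatching.ncard_inter_eq_add_one [Finite V]
    {M : G.Subgraph} (hM : M.IsPerfectMatching) {A B : Set V} (hAB : G.IsBipartiteWith A B)
    {u w : V} (hu : u ∈ X) (huA : u ∈ A) (hw : w ∉ X) (huw : M.Adj u w)
    (hX : ∀ x ∈ X, x ≠ u → ∀ y, M.Adj x y → y ∈ X) :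
    (X ∩ A).ncard = (X ∩ B).ncard + 1 := by
  choose p hp using fun x => (Subgraph.isPerfectMatching_iff.mp hM x).exists
  rw [← Set.ncard_sdiff_singleton_add_one (show u ∈ X ∩ A from ⟨hu, huA⟩)]
  congr 1
  refine Set.ncard_congr (fun x _ => p x) ?_ ?_ ?_
  · rintro x ⟨⟨hx, hxA⟩, hxu⟩
    exact ⟨hX x hx hxu _ (hp x), hAB.mem_of_mem_adj hxA (M.adj_sub (hp x))⟩
  · intro x y _ _ hxy
    exact hM.1.eq_of_adj_right (hp x) (hxy ▸ hp y)
  · rintro y ⟨hy, hyB⟩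
    have hyu : y ≠ u := fun hyu => hAB.disjoint.ne_of_mem huA hyB hyu.symm
    refine ⟨p y, ⟨⟨hX y hy hyu _ (hp y), hAB.symm.mem_of_mem_adj hyB (M.adj_sub (hp y))⟩,
      fun hpy => hw ?_⟩, hM.1.eq_of_adj_left (hp _) (hp y).symm⟩
    rw [Set.mem_singleton_iff] at hpy
    rwa [hM.1.eq_of_adj_left huw (hpy ▸ (hp y).symm)]

lemma IsTightCut.ncard_inter_eq_add_one [Finite V] (h : IsTightCut G X) {M : G.Subgraph}
    (hM : M.IsPerfectMatching) {A B : Set V} (hAB : G.IsBipartiteWith A B) {u w : V} (hu : u ∈ X)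
    (huA : u ∈ A) (hw : w ∉ X) (huw : M.Adj u w) : (X ∩ A).ncard = (X ∩ B).ncard + 1 :=
  hM.ncard_inter_eq_add_one hAB hu huA hw huw fun _ hx hxu _ hxy =>
    h.mem_of_adj hM hu hw huw hx hxu hxy

def cutDarts (G : SimpleGraph V) (X : Set V) : Set (V × V) :=
  {p | p.1 ∈ X ∧ p.2 ∉ X ∧ G.Adj p.1 p.2}

theorem IsTightCut.ncard_cutDarts [Fintype V] [DecidableRel G.Adj] {k : ℕ} (h : IsTightCut G X)
    (hreg : G.IsRegularOfDegree k) {A : Set V} (hA : G.IsBipartiteWith A Aᶜ)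
    (hmaj : (X ∩ A).ncard = (X ∩ Aᶜ).ncard + 1) : (cutDarts G X).ncard = k := by
  classical
  have hnot : ∀ x w, x ∈ X → x ∉ A → w ∉ X → ¬ G.Adj x w := fun x w hx hxA hw hxw => by
    obtain ⟨M, hM, hMxw⟩ := hreg.exists_isPerfectMatching_adj hA.isBipartite hxw
    have := h.ncard_inter_eq_add_one hM hA.symm hx hxA hw hMxw
    omega
  have hbal := hreg.card_interedges_add_mul_card_inter_eq (A := A.toFinset) (B := Aᶜ.toFinset)
    (by simpa using hA) X.toFinset
  have hB : G.interedges (X.toFinset ∩ Aᶜ.toFinset) X.toFinsetᶜ = ∅ := by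
    ext ⟨x, w⟩
    simp only [mem_interedges_iff, mem_inter, mem_compl, Set.mem_toFinset, Set.mem_compl_iff,
      notMem_empty, iff_false]
    exact fun ⟨⟨hx, hxA⟩, hw, hxw⟩ => hnot x w hx hxA hw hxw
  have hC : cutDarts G X = ↑(G.interedges (X.toFinset ∩ A.toFinset) X.toFinsetᶜ) := by
    ext ⟨x, w⟩
    simp only [cutDarts, Set.mem_ofPred_eq, mem_coe, mem_interedges_iff, mem_inter, mem_compl,
      Set.mem_toFinset]
    exact ⟨fun ⟨hx, hw, hxw⟩ => ⟨⟨hx, not_not.mp fun hxA => hnot x w hx hxA hw hxw⟩, hw, hxw⟩,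
      fun ⟨⟨hx, _⟩, hw, hxw⟩ => ⟨hx, hw, hxw⟩⟩
  have hXA : #(X.toFinset ∩ A.toFinset) = (X ∩ A).ncard := by
    rw [Set.ncard_eq_toFinset_card', Set.toFinset_inter]
  have hXAc : #(X.toFinset ∩ Aᶜ.toFinset) = (X ∩ Aᶜ).ncard := by
    rw [Set.ncard_eq_toFinset_card', Set.toFinset_inter]
  rw [hC, Set.ncard_coe_finset]
  rw [hB, card_empty, hXA, hXAc, hmaj, mul_add] at hbal
  omega

end TightCut

section Connectivity

variable {V : Type*} {G : SimpleGraph V} {X : Set V} {k : ℕ}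

/-- Deleting the `X`-ends of the cut separates the rest of `X` from `Xᶜ`. -/
lemma IsKConnected.le_ncard_image_fst_cutDarts [Finite V] (h : IsKConnected k G)
    (hX : k ≤ X.ncard) (hXc : Xᶜ.Nonempty) : k ≤ (Prod.fst '' cutDarts G X).ncard := by
  set T := Prod.fst '' cutDarts G X
  by_contra! hT
  have hTX : T ⊆ X := by
    rintro _ ⟨p, hp, rfl⟩
    exact hp.1
  obtain ⟨x, hxX, hxT⟩ : (X \ T).Nonempty :=
    Set.nonempty_of_ncard_ne_zero fun h0 => by
      have := Set.ncard_sdiff_add_ncard_of_subset hTX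
      omega
  obtain ⟨y, hy⟩ := hXc
  obtain ⟨p⟩ := (h.2 T hT).preconnected ⟨x, hxT⟩ ⟨y, fun hyT => hy (hTX hyT)⟩
  obtain ⟨d, -, hd₁, hd₂⟩ := p.exists_boundary_dart (Subtype.val ⁻¹' X) hxX hy
  exact d.fst.2 ⟨(d.fst, d.snd), ⟨hd₁, hd₂, d.adj⟩, rfl⟩

lemma IsKConnected.injOn_fst_cutDarts [Finite V] (h : IsKConnected k G)
    (hcut : (cutDarts G X).ncard = k) (hX : k ≤ X.ncard) (hXc : Xᶜ.Nonempty) :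
    Set.InjOn Prod.fst (cutDarts G X) :=
  Set.injOn_of_ncard_image_eq
    (le_antisymm (Set.ncard_image_le) (hcut ▸ h.le_ncard_image_fst_cutDarts hX hXc))

lemma three_le_ncard_of_ncard_inter_eq_add_one [Finite V] {A : Set V}
    (h : (X ∩ A).ncard = (X ∩ Aᶜ).ncard + 1) (hX : X.ncard ≠ 1) : 3 ≤ X.ncard := by
  have := Set.ncard_inter_add_ncard_sdiff_eq_ncard X A
  rw [Set.sdiff_eq] at this
  omega

end Connectivity

section Contraction

variable {V : Type*} {G : SimpleGraph V} {X : Set V}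

@[simp] lemma contractOutside_adj_inl_inl {a b : X} :
    (contractOutside G X).Adj (.inl a) (.inl b) ↔ G.Adj a b := by
  simp only [contractOutside, fromRel_adj, ne_eq, Sum.inl.injEq, reduceCtorEq, false_and,
    and_false, exists_false, or_false, exists_and_left, exists_eq_left']
  exact ⟨fun ⟨_, h⟩ => h.elim id (·.symm), fun h => ⟨fun hab => h.ne (congrArg _ hab), .inl h⟩⟩

@[simp] lemma contractOutside_adj_inr_inl {a : X} :
    (contractOutside G X).Adj (.inr ()) (.inl a) ↔ ∃ w, w ∉ X ∧ G.Adj a w := by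
  simp only [contractOutside, fromRel_adj, ne_eq, reduceCtorEq, not_false_eq_true, true_and,
    Sum.inl.injEq, exists_and_left, exists_and_right, Subtype.exists, exists_eq_subtype_mk_iff,
    exists_eq_left', exists_false, false_and, and_false, and_self, or_self, false_or]
  exact ⟨fun ⟨_, _, w, hw, rfl, haw⟩ => ⟨w, hw, haw⟩, fun ⟨w, hw, haw⟩ => ⟨a, a.2, w, hw, rfl, haw⟩⟩

lemma ncard_neighborSet_inr_contractOutside (h : Set.InjOn Prod.fst (cutDarts G X)) :
    ((contractOutside G X).neighborSet (.inr ())).ncard = (cutDarts G X).ncard := by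
  symm
  refine Set.ncard_congr (fun p hp => .inl ⟨p.1, hp.1⟩) ?_ ?_ ?_
  · rintro ⟨x, w⟩ ⟨hx, hw, hxw⟩
    exact contractOutside_adj_inr_inl.mpr ⟨w, hw, hxw⟩
  · intro p q hp hq hpq
    exact h hp hq (congrArg Subtype.val (Sum.inl.inj hpq))
  · rintro (a | ⟨⟩) ha
    · obtain ⟨w, hw, haw⟩ := contractOutside_adj_inr_inl.mp ha
      exact ⟨(a, w), ⟨a.2, hw, haw⟩, rfl⟩
    · exact absurd ha ((contractOutside G X).loopless.irrefl _)

open Classical in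
/-- Pairs the neighbours of the two contraction vertices along the cut edges; `inr ()` is a junk
value for vertices off the cut. -/
noncomputable def cutPartner (G : SimpleGraph V) (X : Set V) : ↥X ⊕ Unit → ↥Xᶜ ⊕ Unit
  | .inl a => if h : ∃ w, w ∉ X ∧ G.Adj a w then .inl ⟨h.choose, h.choose_spec.1⟩ else .inr ()
  | .inr _ => .inr ()

lemma cutPartner_inl_of_adj (h : Set.InjOn Prod.fst (cutDarts G X)) {a : X} {w : V}
    (hw : w ∉ X) (haw : G.Adj a w) : cutPartner G X (.inl a) = .inl ⟨w, hw⟩ := by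
  have hex : ∃ w, w ∉ X ∧ G.Adj a w := ⟨w, hw, haw⟩
  rw [cutPartner, dif_pos hex]
  congr
  exact congrArg Prod.snd (h (x₁ := (a, hex.choose)) (x₂ := (a, w)) ⟨a.2, hex.choose_spec⟩
    ⟨a.2, hw, haw⟩ rfl)

lemma bijOn_cutPartner (hX : Set.InjOn Prod.fst (cutDarts G X))
    (hXc : Set.InjOn Prod.fst (cutDarts G Xᶜ)) :
    Set.BijOn (cutPartner G X) ((contractOutside G X).neighborSet (.inr ()))
      ((contractOutside G Xᶜ).neighborSet (.inr ())) := by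
  have hinr : ∀ {W : Set V}, ¬ (contractOutside G W).Adj (.inr ()) (.inr ()) :=
    fun {W} => (contractOutside G W).loopless.irrefl _
  refine ⟨?_, ?_, ?_⟩
  · rintro (a | ⟨⟩) ha
    · obtain ⟨w, hw, haw⟩ := contractOutside_adj_inr_inl.mp ha
      rw [mem_neighborSet, cutPartner_inl_of_adj hX hw haw]
      exact contractOutside_adj_inr_inl.mpr ⟨a, not_not.mpr a.2, haw.symm⟩
    · exact absurd ha hinr
  · rintro (a | ⟨⟩) ha (b | ⟨⟩) hb hab
    · obtain ⟨w, hw, haw⟩ := contractOutside_adj_inr_inl.mp ha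
      obtain ⟨w', hw', hbw'⟩ := contractOutside_adj_inr_inl.mp hb
      rw [cutPartner_inl_of_adj hX hw haw, cutPartner_inl_of_adj hX hw' hbw'] at hab
      obtain rfl : w = w' := congrArg Subtype.val (Sum.inl.inj hab)
      have := hXc (x₁ := (w, a)) (x₂ := (w, b)) ⟨hw, not_not.mpr a.2, haw.symm⟩
        ⟨hw, not_not.mpr b.2, hbw'.symm⟩ rfl
      exact congrArg Sum.inl (Subtype.ext (congrArg Prod.snd this))
    all_goals exact absurd ‹_› hinr
  · rintro (w | ⟨⟩) hw
    · obtain ⟨a, ha, hwa⟩ := contractOutside_adj_inr_inl.mp hw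
      have ha' : a ∈ X := not_not.mp ha
      exact ⟨.inl ⟨a, ha'⟩, contractOutside_adj_inr_inl.mpr ⟨w, w.2, hwa.symm⟩,
        cutPartner_inl_of_adj hX w.2 hwa.symm⟩
    · exact absurd hw hinr

lemma injOn_sumElim_val {Y : Set V} (x₀ : V) :
    Set.InjOn (Sum.elim (Subtype.val : Y → V) fun _ : Unit => x₀) {x | x ≠ .inr ()} := by
  rintro (a | ⟨⟩) ha (b | ⟨⟩) hb hab
  · exact congrArg Sum.inl (Subtype.ext hab)
  all_goals simp at ha hb

lemma adj_of_contractOutside_adj {x y : ↥X ⊕ Unit} (hx : x ≠ .inr ()) (hy : y ≠ .inr ())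
    (f : Unit → V) (hxy : (contractOutside G X).Adj x y) :
    G.Adj (Sum.elim Subtype.val f x) (Sum.elim Subtype.val f y) := by
  rcases x with x | ⟨⟩ <;> rcases y with y | ⟨⟩ <;> simp at hx hy
  exact contractOutside_adj_inl_inl.mp hxy

theorem isStarProduct_contractOutside (hX : Set.InjOn Prod.fst (cutDarts G X))
    (hXc : Set.InjOn Prod.fst (cutDarts G Xᶜ)) (h3 : (cutDarts G X).ncard = 3) :
    IsStarProduct G (contractOutside G X) (.inr ()) (contractOutside G Xᶜ) (.inr ()) := by
  obtain ⟨⟨x₀, -⟩, -⟩ := Set.nonempty_of_ncard_ne_zero (h3 ▸ three_ne_zero)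
  have hbij := bijOn_cutPartner hX hXc
  have hN : ((contractOutside G X).neighborSet (.inr ())).ncard = 3 :=
    (ncard_neighborSet_inr_contractOutside hX).trans h3
  have hpartner : ∀ {a b} (ha : a ∈ X) (hb : b ∉ X), G.Adj a b →
      b = Sum.elim Subtype.val (fun _ => x₀) (cutPartner G X (.inl ⟨a, ha⟩)) :=
    fun ha hb hab => by rw [cutPartner_inl_of_adj (a := ⟨_, ha⟩) hX hb hab]; rfl
  refine ⟨Sum.elim Subtype.val fun _ => x₀, Sum.elim Subtype.val fun _ => x₀, cutPartner G X,
    hN, hbij.ncard_eq ▸ hN, injOn_sumElim_val _, injOn_sumElim_val _, ?_, ?_, hbij,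
    fun a b => ⟨fun hab => ?_, ?_⟩⟩
  · rintro (a | ⟨⟩) (b | ⟨⟩) ha hb hab
    · exact b.2 ((show (a : V) = b from hab) ▸ a.2)
    all_goals simp at ha hb
  · intro v
    by_cases hv : v ∈ X
    · exact .inl ⟨.inl ⟨v, hv⟩, Sum.inl_ne_inr, rfl⟩
    · exact .inr ⟨.inl ⟨v, hv⟩, Sum.inl_ne_inr, rfl⟩
  · by_cases ha : a ∈ X <;> by_cases hb : b ∈ X
    · exact .inl ⟨.inl ⟨a, ha⟩, .inl ⟨b, hb⟩, Sum.inl_ne_inr, Sum.inl_ne_inr,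
        contractOutside_adj_inl_inl.mpr hab, rfl, rfl⟩
    · exact .inr (.inr ⟨.inl ⟨a, ha⟩, contractOutside_adj_inr_inl.mpr ⟨b, hb, hab⟩,
        .inl ⟨rfl, hpartner ha hb hab⟩⟩)
    · exact .inr (.inr ⟨.inl ⟨b, hb⟩, contractOutside_adj_inr_inl.mpr ⟨a, ha, hab.symm⟩,
        .inr ⟨rfl, hpartner hb ha hab.symm⟩⟩)
    · exact .inr (.inl ⟨.inl ⟨a, ha⟩, .inl ⟨b, hb⟩, Sum.inl_ne_inr, Sum.inl_ne_inr,
        contractOutside_adj_inl_inl.mpr hab, rfl, rfl⟩)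
  · rintro (⟨x, y, hx, hy, hxy, rfl, rfl⟩ | ⟨x, y, hx, hy, hxy, rfl, rfl⟩ | ⟨x, hx, hab⟩)
    · exact adj_of_contractOutside_adj hx hy _ hxy
    · exact adj_of_contractOutside_adj hx hy _ hxy
    · rcases x with x | ⟨⟩
      · obtain ⟨w, hw, hxw⟩ := contractOutside_adj_inr_inl.mp hx
        rw [cutPartner_inl_of_adj hX hw hxw] at hab
        rcases hab with ⟨rfl, rfl⟩ | ⟨rfl, rfl⟩
        exacts [hxw, hxw.symm]
      · exact absurd hx ((contractOutside G X).loopless.irrefl _)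

end Contraction

/-- Let `G` be a 3-connected, cubic, bipartite graph with a non-trivial
tight cut `∂X`, and let `G1` and `G2` be the two tight cut contractions associated with
`∂X`, with contraction vertices `c1` and `c2`. Then `G` is the star product
`(G1,c1)*(G2,c2)`. -/
theorem tightCutContraction_starProduct {V : Type*} [Fintype V]
    (G : SimpleGraph V) (X : Set V)
    (h3con : IsKConnected 3 G) (hcubic : IsCubic G) (hbip : G.Colorable 2)
    (htight : IsTightCut G X) (hnontriv : ¬ IsTrivialCut X) :
    IsStarProduct G (contractOutside G X) (Sum.inr () : ↥X ⊕ Unit)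
      (contractOutside G (Xᶜ : Set V)) (Sum.inr () : ↥(Xᶜ : Set V) ⊕ Unit) := by
  classical
  have hreg := hcubic.isRegularOfDegree
  obtain ⟨v₀⟩ : Nonempty V := Nat.card_pos_iff.mp (by have := h3con.1; omega) |>.1
  obtain ⟨v₁, hv₁⟩ : (G.neighborSet v₀).Nonempty :=
    Set.nonempty_of_ncard_ne_zero (by rw [hcubic v₀]; norm_num)
  obtain ⟨M, hM, -⟩ := hreg.exists_isPerfectMatching_adj hbip hv₁
  obtain ⟨u, w, hu, hw, huw⟩ := htight.exists_adj hM
  obtain ⟨A, huA, hA⟩ := hbip.exists_mem_isBipartiteWith_compl u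
  have hwA : w ∈ Aᶜ := hA.mem_of_mem_adj huA (M.adj_sub huw)
  have hAc : G.IsBipartiteWith Aᶜ Aᶜᶜ := by rw [compl_compl]; exact hA.symm
  have hmaj := htight.ncard_inter_eq_add_one hM hA hu huA hw huw
  have hmajc := htight.compl.ncard_inter_eq_add_one hM hAc hw hwA (not_not.mpr hu) huw.symm
  have hcut := htight.ncard_cutDarts hreg hA hmaj
  have hcutc := htight.compl.ncard_cutDarts hreg hAc hmajc
  exact isStarProduct_contractOutside
    (h3con.injOn_fst_cutDarts hcut (three_le_ncard_of_ncard_inter_eq_add_one hmaj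
      (hnontriv ∘ .inl)) ⟨w, hw⟩)
    (h3con.injOn_fst_cutDarts hcutc (three_le_ncard_of_ncard_inter_eq_add_one hmajc
      (hnontriv ∘ .inr)) ⟨u, not_not.mpr hu⟩)
    hcut
end

section
/- Let G be a bipartite graph with colour classes A and B, and let ∂X be a cut in G such that every endpoint lying in X of an edge of ∂X belongs to A, and suppose there exists a perfect matching M of G with |∂X ∩ M| = 1. Then |X ∩ A| − |X ∩ B| = 1 = |(V(G) \ X) ∩ B| − |(V(G) \ X) ∩ A|, and moreover |∂X ∩ M'| = 1 for every perfect matching M' of G. -/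
open SimpleGraph

private theorem bipartite_cut_aux {V : Type*} [Fintype V] (G : SimpleGraph V)
    (A B : Set V) (hAB : IsBipartition G A B) (X : Set V)
    (hXA : ∀ u w : V, G.Adj u w → u ∈ X → w ∉ X → u ∈ A)
    (M' : G.Subgraph) (hM' : M'.IsPerfectMatching) :
    (X ∩ A).ncard = (X ∩ B).ncard + (edgeCut G X ∩ M'.edgeSet).ncard ∧
    ((Xᶜ : Set V) ∩ B).ncard = ((Xᶜ : Set V) ∩ A).ncard + (edgeCut G X ∩ M'.edgeSet).ncard := by
  classical
  have hpm : ∀ v : V, ∃! w, M'.Adj v w := Subgraph.isPerfectMatching_iff.mp hM'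
  set f : V → V := fun v => (hpm v).choose with hf
  have hfadj : ∀ v, M'.Adj v (f v) := fun v => (hpm v).choose_spec.1
  have huniq : ∀ v w, M'.Adj v w → w = f v := fun v w h => (hpm v).choose_spec.2 w h
  have hinv : ∀ v, f (f v) = v := fun v => (huniq (f v) v (hfadj v).symm).symm
  have hfinj : Function.Injective f :=
    Function.LeftInverse.injective (g := f) hinv
  have hGadj : ∀ v, G.Adj v (f v) := fun v => M'.adj_sub (hfadj v)
  have hdisj := hAB.2.1
  have hAnotB : ∀ v, v ∈ A → v ∉ B := fun v hv => Set.disjoint_left.mp hdisj hv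
  have hBnotA : ∀ v, v ∈ B → v ∉ A := fun v hv => Set.disjoint_right.mp hdisj hv
  have hcolA : ∀ v, v ∈ A → f v ∈ B := by
    intro v hv
    rcases hAB.2.2 v (f v) (hGadj v) with ⟨_, h⟩ | ⟨h, _⟩
    · exact h
    · exact absurd h (hAnotB v hv)
  have hcolB : ∀ v, v ∈ B → f v ∈ A := by
    intro v hv
    rcases hAB.2.2 v (f v) (hGadj v) with ⟨h, _⟩ | ⟨_, h⟩
    · exact absurd h (hBnotA v hv)
    · exact h
  have hstayB : ∀ v, v ∈ X → v ∈ B → f v ∈ X := by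
    intro v hvX hvB
    by_contra hout
    exact hAnotB v (hXA v (f v) (hGadj v) hvX hout) hvB
  have hstayA : ∀ v, v ∉ X → v ∈ A → f v ∉ X := by
    intro v hvX hvA hin
    exact hAnotB (f v) (hXA (f v) v (hGadj v).symm hin hvX) (hcolA v hvA)
  have count1 : (X ∩ A).ncard = (X ∩ B).ncard + (edgeCut G X ∩ M'.edgeSet).ncard := by
    have hsplit : X ∩ A = ((X ∩ A) ∩ {a | f a ∈ X}) ∪ ((X ∩ A) ∩ {a | f a ∉ X}) := by
      ext a; by_cases h : f a ∈ X <;> simp [h]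
    have hdis : Disjoint ((X ∩ A) ∩ {a | f a ∈ X}) ((X ∩ A) ∩ {a | f a ∉ X}) := by
      rw [Set.disjoint_left]
      rintro a ⟨-, ha⟩ ⟨-, ha'⟩
      exact ha' ha
    have hS : (X ∩ A) ∩ {a | f a ∈ X} = f '' (X ∩ B) := by
      ext a
      constructor
      · rintro ⟨⟨haX, haA⟩, hfa⟩
        exact ⟨f a, ⟨hfa, hcolA a haA⟩, hinv a⟩
      · rintro ⟨b, ⟨hbX, hbB⟩, rfl⟩
        exact ⟨⟨hstayB b hbX hbB, hcolB b hbB⟩, show f (f b) ∈ X by rw [hinv]; exact hbX⟩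
    have hT : edgeCut G X ∩ M'.edgeSet = (fun a => s(a, f a)) '' ((X ∩ A) ∩ {a | f a ∉ X}) := by
      ext e
      constructor
      · rintro ⟨⟨heG, u, w, rfl, huX, hwX⟩, heM⟩
        have hadj : M'.Adj u w := heM
        have hw : w = f u := huniq u w hadj
        subst hw
        exact ⟨u, ⟨⟨huX, hXA u (f u) (M'.adj_sub hadj) huX hwX⟩, hwX⟩, rfl⟩
      · rintro ⟨a, ⟨⟨haX, -⟩, hfa⟩, rfl⟩
        exact ⟨⟨(hGadj a), a, f a, rfl, haX, hfa⟩, (hfadj a)⟩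
    have hTinj : Set.InjOn (fun a => s(a, f a)) ((X ∩ A) ∩ {a | f a ∉ X}) := by
      rintro a ⟨⟨haX, -⟩, -⟩ b ⟨⟨hbX, -⟩, hfb⟩ hab
      simp only [Sym2.eq_iff] at hab
      rcases hab with ⟨h, -⟩ | ⟨h1, -⟩
      · exact h
      · exact absurd (h1 ▸ haX) hfb
    rw [hsplit, Set.ncard_union_eq hdis (Set.toFinite _) (Set.toFinite _), hS,
      Set.ncard_image_of_injective _ hfinj, hT, Set.ncard_image_of_injOn hTinj]
  have count2 : ((Xᶜ : Set V) ∩ B).ncard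
      = ((Xᶜ : Set V) ∩ A).ncard + (edgeCut G X ∩ M'.edgeSet).ncard := by
    have hsplit : (Xᶜ : Set V) ∩ B
        = (((Xᶜ : Set V) ∩ B) ∩ {b | f b ∉ X}) ∪ (((Xᶜ : Set V) ∩ B) ∩ {b | f b ∈ X}) := by
      ext b; by_cases h : f b ∈ X <;> simp [h]
    have hdis : Disjoint (((Xᶜ : Set V) ∩ B) ∩ {b | f b ∉ X})
        (((Xᶜ : Set V) ∩ B) ∩ {b | f b ∈ X}) := by
      rw [Set.disjoint_left]
      rintro b ⟨-, hb⟩ ⟨-, hb'⟩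
      exact hb hb'
    have hS : ((Xᶜ : Set V) ∩ B) ∩ {b | f b ∉ X} = f '' ((Xᶜ : Set V) ∩ A) := by
      ext b
      constructor
      · rintro ⟨⟨hbX, hbB⟩, hfb⟩
        exact ⟨f b, ⟨hfb, hcolB b hbB⟩, hinv b⟩
      · rintro ⟨a, ⟨haX, haA⟩, rfl⟩
        exact ⟨⟨hstayA a haX haA, hcolA a haA⟩, show f (f a) ∉ X by rw [hinv]; exact haX⟩
    have hT : edgeCut G X ∩ M'.edgeSet
        = (fun b => s(f b, b)) '' (((Xᶜ : Set V) ∩ B) ∩ {b | f b ∈ X}) := by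
      ext e
      constructor
      · rintro ⟨⟨heG, u, w, rfl, huX, hwX⟩, heM⟩
        have hadj : M'.Adj u w := heM
        have hu : u = f w := huniq w u hadj.symm
        have huA : u ∈ A := hXA u w (M'.adj_sub hadj) huX hwX
        have hwB : w ∈ B := by
          rcases hAB.2.2 u w (M'.adj_sub hadj) with ⟨-, h⟩ | ⟨h, -⟩
          · exact h
          · exact absurd h (hAnotB u huA)
        exact ⟨w, ⟨⟨hwX, hwB⟩, show f w ∈ X by rw [← hu]; exact huX⟩,
          show s(f w, w) = s(u, w) by rw [← hu]⟩
      · rintro ⟨b, ⟨⟨hbX, -⟩, hfb⟩, rfl⟩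
        exact ⟨⟨(hGadj b).symm, f b, b, rfl, hfb, hbX⟩, (hfadj b).symm⟩
    have hTinj : Set.InjOn (fun b => s(f b, b)) (((Xᶜ : Set V) ∩ B) ∩ {b | f b ∈ X}) := by
      rintro a ⟨⟨haX, -⟩, hfa⟩ b ⟨⟨hbX, -⟩, -⟩ hab
      simp only [Sym2.eq_iff] at hab
      rcases hab with ⟨-, h⟩ | ⟨h1, -⟩
      · exact h
      · exact absurd (h1 ▸ hfa) hbX
    rw [hsplit, Set.ncard_union_eq hdis (Set.toFinite _) (Set.toFinite _), hS,
      Set.ncard_image_of_injective _ hfinj, hT, Set.ncard_image_of_injOn hTinj]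
  exact ⟨count1, count2⟩

/-- Let `G` be a bipartite graph with colour classes `A` and `B`, and
let `∂X` be a cut such that every endpoint lying in `X` of an edge of `∂X` belongs to
`A`, and suppose some perfect matching `M` satisfies `|∂X ∩ M| = 1`. Then
`|X ∩ A| − |X ∩ B| = 1 = |Xᶜ ∩ B| − |Xᶜ ∩ A|`, and `|∂X ∩ M'| = 1` for every perfect
matching `M'` of `G`. -/
theorem bipartite_cut_technical {V : Type*} [Fintype V] (G : SimpleGraph V)
    (A B : Set V) (hAB : IsBipartition G A B) (X : Set V)
    (hXA : ∀ u w : V, G.Adj u w → u ∈ X → w ∉ X → u ∈ A)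
    (M : G.Subgraph) (hM : M.IsPerfectMatching)
    (hM1 : (edgeCut G X ∩ M.edgeSet).ncard = 1) :
    (X ∩ A).ncard = (X ∩ B).ncard + 1 ∧
    ((Xᶜ : Set V) ∩ B).ncard = ((Xᶜ : Set V) ∩ A).ncard + 1 ∧
    ∀ M' : G.Subgraph, M'.IsPerfectMatching →
      (edgeCut G X ∩ M'.edgeSet).ncard = 1 := by
  obtain ⟨c1, c2⟩ := bipartite_cut_aux G A B hAB X hXA M hM
  rw [hM1] at c1 c2
  refine ⟨c1, c2, fun M' hM' => ?_⟩
  obtain ⟨d1, -⟩ := bipartite_cut_aux G A B hAB X hXA M' hM'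
  omega
end

section
/- Let G be a bipartite graph that can be represented as the star product (G1,v1)*(G2,v2), and suppose that any two edges of the principal 3-edge cut of G occur together in some 2-factor of G. Then G is 2-factor Hamiltonian if and only if both G1 and G2 are 2-factor Hamiltonian. -/
open SimpleGraph

/-!
A 2-factor of `G` crosses the principal cut an even number of times, so it uses none or two of
the three cut edges. Fix a proper 2-colouring of `G`. Counting the edges of a 2-factor at each
colour class of the `G1` side, the edges inside that side contribute equally to both classes, so
the difference between the numbers of used cut edges ending in the two classes does not depend on
the 2-factor. A cut-free 2-factor makes it zero; then any two cut edges lying in a common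
2-factor end in differently coloured vertices, which is impossible for all three pairs. Hence
every 2-factor of `G` uses exactly two cut edges.

If it uses the cut edges at `x` and `y`, it restricts to 2-factors of `G1` and `G2` closed up
through `v1` and `v2`; its cycle through `f x` contains both cut edges, so when both restrictions
are Hamiltonian it passes through every vertex. Conversely, a 2-factor of `G1` through `v1 x` and
`v1 y` glues to the `G2` side of a 2-factor of `G` using the cut edges at `x` and `y`, and
collapsing the `G2` side onto `v1` maps the glued 2-factor onto the given one, so connectivity
transfers.
-/

namespace SimpleGraph

variable {α β : Type*}

theorem Connected.of_surjective_adj_or_eq {A : SimpleGraph α} {B : SimpleGraph β}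
    (h : A.Connected) (r : α → β) (hr : ∀ a b, A.Adj a b → B.Adj (r a) (r b) ∨ r a = r b)
    (hsurj : Function.Surjective r) : B.Connected := by
  rw [connected_iff]
  refine ⟨fun u w => ?_, h.nonempty.map r⟩
  obtain ⟨a, rfl⟩ := hsurj u
  obtain ⟨b, rfl⟩ := hsurj w
  have hab := (reachable_iff_reflTransGen a b).1 (h.preconnected a b)
  refine (reachable_iff_reflTransGen _ _).2 (hab.lift' r fun a b hab => ?_)
  rcases hr a b hab with hadj | heq
  · exact .single hadj
  · show Relation.ReflTransGen B.Adj (r a) (r b)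
    rw [heq]

theorem Reachable.mem_of_adj_closed {A : SimpleGraph α} {S : Set α}
    (hS : ∀ a b, A.Adj a b → a ∈ S → b ∈ S) {a b : α} (h : A.Reachable a b) (ha : a ∈ S) :
    b ∈ S := by
  obtain ⟨p⟩ := h
  induction p with
  | nil => exact ha
  | cons hadj _ ih => exact ih (hS _ _ hadj ha)

theorem Subgraph.IsSpanning.connected_iff {G : SimpleGraph α} {H : G.Subgraph}
    (h : H.IsSpanning) : H.Connected ↔ H.spanningCoe.Connected :=
  Subgraph.connected_iff'.trans (H.spanningCoeEquivCoeOfSpanning h).connected_iff.symm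

section PairCounting

variable [Finite α] (A : SimpleGraph α)

theorem ncard_adj_pairs_fst_mem {T : Set α} (hT : ∀ a ∈ T, (A.neighborSet a).ncard = 2) :
    {p : α × α | A.Adj p.1 p.2 ∧ p.1 ∈ T}.ncard = 2 * T.ncard := by
  have hunion : {p : α × α | A.Adj p.1 p.2 ∧ p.1 ∈ T} =
      ⋃ a ∈ T, Prod.mk a '' A.neighborSet a := by
    ext ⟨a, b⟩; simp [and_comm]
  rw [hunion, T.toFinite.ncard_biUnion (fun _ _ => Set.toFinite _), ← finsum_one,
    mul_finsum_mem]
  · refine finsum_mem_congr rfl fun a ha => ?_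
    rw [Set.ncard_image_of_injective _ (Prod.mk_right_injective a), hT a ha, mul_one]
  · intro a _ b _ hab
    simp only [Function.onFun, Set.disjoint_left, Set.mem_image]
    rintro _ ⟨_, _, rfl⟩ ⟨_, _, h⟩
    exact hab (congrArg Prod.fst h).symm

theorem two_mul_ncard_eq_ncard_adj_pairs_add {T : Set α}
    (hT : ∀ a ∈ T, (A.neighborSet a).ncard = 2) (S : Set α) :
    2 * T.ncard = {p : α × α | A.Adj p.1 p.2 ∧ p.1 ∈ T ∧ p.2 ∈ S}.ncard +
      {p : α × α | A.Adj p.1 p.2 ∧ p.1 ∈ T ∧ p.2 ∉ S}.ncard := by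
  rw [← ncard_adj_pairs_fst_mem A hT,
    ← Set.ncard_union_eq (Set.disjoint_left.2 fun _ h h' => h'.2.2 h.2.2)]
  congr 1
  ext p
  by_cases hp : p.2 ∈ S <;> simp [hp]

theorem even_ncard_adj_pairs_mem_mem (T : Set α) :
    Even {p : α × α | A.Adj p.1 p.2 ∧ p.1 ∈ T ∧ p.2 ∈ T}.ncard := by
  classical
  have := Fintype.ofFinite α
  let B : SimpleGraph α := ((⊤ : A.Subgraph).induce T).spanningCoe
  refine ⟨Finset.card B.edgeFinset, ?_⟩
  rw [← two_mul, B.two_mul_card_edgeFinset, Set.ncard_eq_toFinset_card']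
  congr 1
  ext p
  simp only [Set.toFinset_ofPred, Finset.mem_filter, Finset.mem_univ, true_and,
    Subgraph.spanningCoe_adj, Subgraph.induce_adj, Subgraph.top_adj, B]
  tauto

end PairCounting

theorem Coloring.ncard_adj_pairs_color_eq {A : SimpleGraph α} (C : A.Coloring (Fin 2))
    (S : Set α) :
    {p : α × α | A.Adj p.1 p.2 ∧ p.1 ∈ S ∧ C p.1 = 0 ∧ p.2 ∈ S}.ncard =
      {p : α × α | A.Adj p.1 p.2 ∧ p.1 ∈ S ∧ C p.1 = 1 ∧ p.2 ∈ S}.ncard := by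
  have hswap : ∀ {a b}, A.Adj a b → (C a = 0 ↔ C b = 1) := fun h => by
    have := C.valid h; omega
  rw [← Set.ncard_image_of_injective _ Prod.swap_injective, Set.image_swap_eq_preimage_swap]
  congr 1
  ext ⟨a, b⟩
  simp only [Set.mem_preimage, Prod.swap_prod_mk, Set.mem_ofPred_eq, A.adj_comm b a]
  constructor
  · rintro ⟨h, hb, hcb, ha⟩
    exact ⟨h, ha, (hswap h.symm).1 hcb, hb⟩
  · rintro ⟨h, ha, hca, hb⟩
    exact ⟨h, hb, (hswap h.symm).2 hca, ha⟩

end SimpleGraph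

section

variable {V V1 V2 : Type*} {G : SimpleGraph V} {G1 : SimpleGraph V1} {v1 : V1}
  {G2 : SimpleGraph V2} {v2 : V2} {f : V1 → V} {g : V2 → V} {m : V1 → V2}

namespace StarProduct

def TwoFactorsCoverPairs (G : SimpleGraph V) (S : Set (Sym2 V)) : Prop :=
  ∀ e ∈ S, ∀ e' ∈ S, e ≠ e' → ∃ H : G.Subgraph, IsTwoFactor G H ∧ e ∈ H.edgeSet ∧ e' ∈ H.edgeSet

def leftSide (v1 : V1) (f : V1 → V) : Set V := f '' {x | x ≠ v1}

theorem mem_leftSide {u : V1} (hu : u ≠ v1) : f u ∈ leftSide v1 f := ⟨u, hu, rfl⟩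

open Classical in
/-- The end at `u` of the edge `u u'` of `G1`, seen in `G`: an edge at `v1` becomes the
principal-cut edge `f u' — g (m u')`, whose end at `v1` is `g (m u')`. -/
noncomputable def liftEndpoint (v1 : V1) (f : V1 → V) (g : V2 → V) (m : V1 → V2) (u u' : V1) : V :=
  if u = v1 then g (m u') else f u

theorem liftEndpoint_self (u' : V1) : liftEndpoint v1 f g m v1 u' = g (m u') := if_pos rfl

theorem liftEndpoint_of_ne {u : V1} (hu : u ≠ v1) (u' : V1) : liftEndpoint v1 f g m u u' = f u :=
  if_neg hu

def cutNeighbors (G1 : SimpleGraph V1) (v1 : V1) (f : V1 → V) (g : V2 → V) (m : V1 → V2)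
    (J : G.Subgraph) : Set V1 :=
  {z | G1.Adj v1 z ∧ J.Adj (f z) (g (m z))}

def leftPart (G1 : SimpleGraph V1) (v1 : V1) (f : V1 → V) (g : V2 → V) (m : V1 → V2)
    (J : G.Subgraph) : G1.Subgraph where
  verts := Set.univ
  Adj u u' := G1.Adj u u' ∧ J.Adj (liftEndpoint v1 f g m u u') (liftEndpoint v1 f g m u' u)
  adj_sub h := h.1
  edge_vert _ := trivial
  symm := ⟨fun _ _ h => ⟨h.1.symm, h.2.symm⟩⟩

theorem neighborSet_leftPart_self (J : G.Subgraph) :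
    (leftPart G1 v1 f g m J).neighborSet v1 = cutNeighbors G1 v1 f g m J := by
  ext z
  refine and_congr_right fun hz => ?_
  rw [liftEndpoint_self, liftEndpoint_of_ne hz.ne', J.adj_comm]

theorem reachable_of_connected_leftPart {H : G.Subgraph}
    (hF : (leftPart G1 v1 f g m H).Connected) {c : V}
    (hcut : ∀ e ∈ principalCut G1 v1 f g m ∩ H.edgeSet, ∀ a ∈ e, H.spanningCoe.Reachable c a)
    (u : V1) (hu : u ≠ v1) : H.spanningCoe.Reachable c (f u) := by
  have hv1u := ((Subgraph.IsSpanning.connected_iff (H := leftPart G1 v1 f g m H)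
    fun _ => trivial).1 hF).preconnected v1 u
  refine (hv1u.mem_of_adj_closed (S := {w | w = v1 ∨ H.spanningCoe.Reachable c (f w)}) ?_
    (Or.inl rfl)).resolve_left hu
  rintro w w' ⟨hG1, hH⟩ hw
  by_cases hw' : w' = v1
  · exact Or.inl hw'
  right
  by_cases hw1 : w = v1
  · subst hw1
    rw [liftEndpoint_self, liftEndpoint_of_ne hw' w] at hH
    exact hcut _ ⟨⟨w', hG1, rfl⟩, H.adj_symm hH⟩ _ (Sym2.mem_mk_left _ _)
  · rw [liftEndpoint_of_ne hw1, liftEndpoint_of_ne hw'] at hH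
    exact (hw.resolve_left hw1).trans (Adj.reachable hH)

end StarProduct

namespace IsStarProductWitness

open StarProduct

theorem ncard_neighborSet_left (hw : IsStarProductWitness G G1 v1 G2 v2 f g m) :
    (G1.neighborSet v1).ncard = 3 :=
  hw.1

theorem injOn_left (hw : IsStarProductWitness G G1 v1 G2 v2 f g m) : Set.InjOn f {x | x ≠ v1} :=
  hw.2.2.1

theorem left_ne_right (hw : IsStarProductWitness G G1 v1 G2 v2 f g m) {x : V1} {y : V2}
    (hx : x ≠ v1) (hy : y ≠ v2) : f x ≠ g y :=
  hw.2.2.2.2.1 x y hx hy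

theorem exists_left_or_right (hw : IsStarProductWitness G G1 v1 G2 v2 f g m) (a : V) :
    (∃ x, x ≠ v1 ∧ f x = a) ∨ (∃ y, y ≠ v2 ∧ g y = a) :=
  hw.2.2.2.2.2.1 a

theorem m_ne (hw : IsStarProductWitness G G1 v1 G2 v2 f g m) {z : V1} (hz : G1.Adj v1 z) :
    m z ≠ v2 :=
  (hw.2.2.2.2.2.2.1.mapsTo hz).ne'

theorem adj_iff (hw : IsStarProductWitness G G1 v1 G2 v2 f g m) (a b : V) : G.Adj a b ↔
    ((∃ x y, x ≠ v1 ∧ y ≠ v1 ∧ G1.Adj x y ∧ a = f x ∧ b = f y) ∨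
     (∃ x y, x ≠ v2 ∧ y ≠ v2 ∧ G2.Adj x y ∧ a = g x ∧ b = g y) ∨
     (∃ x, G1.Adj v1 x ∧ ((a = f x ∧ b = g (m x)) ∨ (b = f x ∧ a = g (m x))))) :=
  hw.2.2.2.2.2.2.2 a b

theorem g_notMem_leftSide (hw : IsStarProductWitness G G1 v1 G2 v2 f g m) {t : V2} (ht : t ≠ v2) :
    g t ∉ leftSide v1 f := by
  rintro ⟨u, hu, h⟩
  exact hw.left_ne_right hu ht h

theorem exists_liftEndpoint_eq_of_adj (hw : IsStarProductWitness G G1 v1 G2 v2 f g m) {u : V1}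
    (hu : u ≠ v1) {b : V} (h : G.Adj (f u) b) :
    ∃ u', G1.Adj u u' ∧ liftEndpoint v1 f g m u' u = b := by
  rcases (hw.adj_iff _ _).1 h with ⟨x, y, hx, hy, hxy, hux, rfl⟩ | ⟨x, -, hx, -, -, hux, -⟩ |
      ⟨z, hz, ⟨huz, rfl⟩ | ⟨rfl, huz⟩⟩
  · obtain rfl := hw.injOn_left hu hx hux
    exact ⟨y, hxy, liftEndpoint_of_ne hy u⟩
  · exact absurd hux (hw.left_ne_right hu hx)
  · obtain rfl := hw.injOn_left hu hz.ne' huz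
    exact ⟨v1, hz.symm, liftEndpoint_self u⟩
  · exact absurd huz (hw.left_ne_right hu (hw.m_ne hz))

theorem adj_left_iff_of_notMem (hw : IsStarProductWitness G G1 v1 G2 v2 f g m) {u : V1}
    (hu : u ≠ v1) {b : V} (hb : b ∉ leftSide v1 f) :
    G.Adj (f u) b ↔ G1.Adj v1 u ∧ b = g (m u) := by
  constructor
  · intro h
    obtain ⟨u', hadj, rfl⟩ := hw.exists_liftEndpoint_eq_of_adj hu h
    by_cases hu' : u' = v1
    · subst hu'
      exact ⟨hadj.symm, liftEndpoint_self u⟩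
    · exact absurd (liftEndpoint_of_ne hu' u ▸ mem_leftSide hu') hb
  · rintro ⟨h, rfl⟩
    exact (hw.adj_iff _ _).2 (Or.inr (Or.inr ⟨u, h, Or.inl ⟨rfl, rfl⟩⟩))

theorem injOn_liftEndpoint (hw : IsStarProductWitness G G1 v1 G2 v2 f g m) {u : V1}
    (hu : u ≠ v1) : Set.InjOn (liftEndpoint v1 f g m · u) (G1.neighborSet u) := by
  have hcross : ∀ w, w ≠ v1 → G1.Adj u v1 →
      liftEndpoint v1 f g m w u ≠ liftEndpoint v1 f g m v1 u :=
    fun w hw1 huv => by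
      rw [liftEndpoint_of_ne hw1, liftEndpoint_self]
      exact hw.left_ne_right hw1 (hw.m_ne huv.symm)
  intro w hwu w' hw'u h
  dsimp only at h
  by_cases hw1 : w = v1 <;> by_cases hw1' : w' = v1
  · rw [hw1, hw1']
  · subst hw1; exact absurd h.symm (hcross w' hw1' hwu)
  · subst hw1'; exact absurd h (hcross w hw1 hw'u)
  · rw [liftEndpoint_of_ne hw1, liftEndpoint_of_ne hw1'] at h
    exact hw.injOn_left hw1 hw1' h

theorem image_neighborSet_leftPart (hw : IsStarProductWitness G G1 v1 G2 v2 f g m)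
    (J : G.Subgraph) {u : V1} (hu : u ≠ v1) :
    (liftEndpoint v1 f g m · u) '' (leftPart G1 v1 f g m J).neighborSet u =
      J.neighborSet (f u) := by
  ext b
  constructor
  · rintro ⟨u', ⟨-, hJ⟩, rfl⟩
    rwa [liftEndpoint_of_ne hu] at hJ
  · intro hb
    obtain ⟨u', hadj, rfl⟩ := hw.exists_liftEndpoint_eq_of_adj hu (J.adj_sub hb)
    exact ⟨u', ⟨hadj, by rwa [liftEndpoint_of_ne hu]⟩, rfl⟩

theorem isTwoFactor_leftPart (hw : IsStarProductWitness G G1 v1 G2 v2 f g m) {J : G.Subgraph}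
    (hJ : IsTwoFactor G J) (hcut : (cutNeighbors G1 v1 f g m J).ncard = 2) :
    IsTwoFactor G1 (leftPart G1 v1 f g m J) := by
  refine ⟨fun _ => trivial, fun u => ?_⟩
  by_cases hu : u = v1
  · rwa [hu, neighborSet_leftPart_self]
  · rw [← ((hw.injOn_liftEndpoint hu).mono fun _ h => h.1).ncard_image,
      hw.image_neighborSet_leftPart J hu]
    exact hJ.2 (f u)

def glue (hw : IsStarProductWitness G G1 v1 G2 v2 f g m) (F1 : G1.Subgraph) (K : G.Subgraph) :
    G.Subgraph where
  verts := Set.univ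
  Adj a b := (∃ u u', u ≠ v1 ∧ u' ≠ v1 ∧ F1.Adj u u' ∧ f u = a ∧ f u' = b) ∨
    (K.Adj a b ∧ (a ∉ leftSide v1 f ∨ b ∉ leftSide v1 f))
  adj_sub := by
    rintro a b (⟨u, u', hu, hu', h, rfl, rfl⟩ | ⟨h, -⟩)
    · exact (hw.adj_iff _ _).2 (Or.inl ⟨u, u', hu, hu', F1.adj_sub h, rfl, rfl⟩)
    · exact K.adj_sub h
  edge_vert _ := trivial
  symm := ⟨fun a b => by
    rintro (⟨u, u', hu, hu', h, rfl, rfl⟩ | ⟨h, hab⟩)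
    exacts [Or.inl ⟨u', u, hu', hu, h.symm, rfl, rfl⟩, Or.inr ⟨h.symm, hab.symm⟩]⟩

theorem neighborSet_glue_right (hw : IsStarProductWitness G G1 v1 G2 v2 f g m)
    (F1 : G1.Subgraph) (K : G.Subgraph) {t : V2} (ht : t ≠ v2) :
    (hw.glue F1 K).neighborSet (g t) = K.neighborSet (g t) := by
  ext b
  constructor
  · rintro (⟨u, -, hu, -, -, h, -⟩ | ⟨h, -⟩)
    exacts [absurd h (hw.left_ne_right hu ht), h]
  · exact fun h => Or.inr ⟨h, Or.inl (hw.g_notMem_leftSide ht)⟩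

theorem neighborSet_glue_left (hw : IsStarProductWitness G G1 v1 G2 v2 f g m)
    {F1 : G1.Subgraph} {K : G.Subgraph}
    (hcut : F1.neighborSet v1 = cutNeighbors G1 v1 f g m K) {u : V1} (hu : u ≠ v1) :
    (hw.glue F1 K).neighborSet (f u) = (liftEndpoint v1 f g m · u) '' F1.neighborSet u := by
  ext b
  constructor
  · rintro (⟨w, w', hw1, hw1', h, hwu, rfl⟩ | ⟨h, hb⟩)
    · obtain rfl := hw.injOn_left hw1 hu hwu
      exact ⟨w', h, liftEndpoint_of_ne hw1' w⟩
    · have hb : b ∉ leftSide v1 f := hb.resolve_left (not_not.2 (mem_leftSide hu))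
      obtain ⟨hu1, rfl⟩ := (hw.adj_left_iff_of_notMem hu hb).1 (K.adj_sub h)
      have hv1u : u ∈ F1.neighborSet v1 := hcut ▸ ⟨hu1, h⟩
      exact ⟨v1, F1.adj_symm hv1u, liftEndpoint_self u⟩
  · rintro ⟨u', h, rfl⟩
    by_cases hu' : u' = v1
    · rw [hu'] at h ⊢
      have hcu : u ∈ cutNeighbors G1 v1 f g m K := hcut ▸ F1.adj_symm h
      show (hw.glue F1 K).Adj (f u) (liftEndpoint v1 f g m v1 u)
      rw [liftEndpoint_self]
      exact Or.inr ⟨hcu.2, Or.inr (hw.g_notMem_leftSide (hw.m_ne hcu.1))⟩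
    · exact Or.inl ⟨u, u', hu, hu', h, rfl, (liftEndpoint_of_ne hu' u).symm⟩

theorem isTwoFactor_glue (hw : IsStarProductWitness G G1 v1 G2 v2 f g m) {F1 : G1.Subgraph}
    {K : G.Subgraph} (hF1 : IsTwoFactor G1 F1) (hK : IsTwoFactor G K)
    (hcut : F1.neighborSet v1 = cutNeighbors G1 v1 f g m K) : IsTwoFactor G (hw.glue F1 K) := by
  refine ⟨fun _ => trivial, fun a => ?_⟩
  rcases hw.exists_left_or_right a with ⟨u, hu, rfl⟩ | ⟨t, ht, rfl⟩
  · rw [hw.neighborSet_glue_left hcut hu,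
      ((hw.injOn_liftEndpoint hu).mono
        (fun _ h => F1.adj_sub h : F1.neighborSet u ⊆ _)).ncard_image]
    exact hF1.2 u
  · rw [hw.neighborSet_glue_right F1 K ht]
    exact hK.2 (g t)

theorem injOn_cutEdge (hw : IsStarProductWitness G G1 v1 G2 v2 f g m) :
    Set.InjOn (fun z => s(f z, g (m z))) (G1.neighborSet v1) := by
  intro x hx y hy h
  rcases Sym2.eq_iff.1 h with ⟨h, -⟩ | ⟨h, -⟩
  · exact hw.injOn_left hx.ne' hy.ne' h
  · exact absurd h (hw.left_ne_right hx.ne' (hw.m_ne hy))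

theorem ncard_cutNeighbors_eq (hw : IsStarProductWitness G G1 v1 G2 v2 f g m) (J : G.Subgraph) :
    (cutNeighbors G1 v1 f g m J).ncard = (principalCut G1 v1 f g m ∩ J.edgeSet).ncard := by
  rw [← (hw.injOn_cutEdge.mono fun _ h => h.1).ncard_image]
  congr 1
  ext e
  constructor
  · rintro ⟨z, ⟨hz, hJ⟩, rfl⟩
    exact ⟨⟨z, hz, rfl⟩, hJ⟩
  · rintro ⟨⟨z, hz, rfl⟩, hJ⟩
    exact ⟨z, ⟨hz, hJ⟩, rfl⟩

theorem ncard_adj_pairs_leaving_leftSide (hw : IsStarProductWitness G G1 v1 G2 v2 f g m)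
    (J : G.Subgraph) {T : Set V} (hT : T ⊆ leftSide v1 f) :
    {p : V × V | J.Adj p.1 p.2 ∧ p.1 ∈ T ∧ p.2 ∉ leftSide v1 f}.ncard =
      {z ∈ cutNeighbors G1 v1 f g m J | f z ∈ T}.ncard := by
  have hinj : Set.InjOn (fun z => (f z, g (m z))) {z ∈ cutNeighbors G1 v1 f g m J | f z ∈ T} :=
    fun x hx y hy h => hw.injOn_left hx.1.1.ne' hy.1.1.ne' (congrArg Prod.fst h)
  rw [← hinj.ncard_image]
  congr 1
  ext ⟨a, b⟩
  constructor
  · rintro ⟨hab, ha, hb⟩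
    obtain ⟨u, hu, rfl⟩ := hT ha
    obtain ⟨hu1, rfl⟩ := (hw.adj_left_iff_of_notMem hu hb).1 (J.adj_sub hab)
    exact ⟨u, ⟨⟨hu1, hab⟩, ha⟩, rfl⟩
  · rintro ⟨z, ⟨⟨hz, hJ⟩, hzT⟩, h⟩
    obtain ⟨rfl, rfl⟩ := Prod.mk.inj h
    exact ⟨hJ, hzT, hw.g_notMem_leftSide (hw.m_ne hz)⟩

/-- `2 * T.ncard` counts the edges of `J` inside `T` twice and the cut edges leaving `T` once. -/
theorem even_ncard_cutNeighbors (hw : IsStarProductWitness G G1 v1 G2 v2 f g m) [Finite V]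
    {J : G.Subgraph} (hJ : IsTwoFactor G J) {T : Set V} (hT : T ⊆ leftSide v1 f)
    (hTJ : ∀ a b, J.Adj a b → a ∈ T → b ∈ leftSide v1 f → b ∈ T) :
    Even {z ∈ cutNeighbors G1 v1 f g m J | f z ∈ T}.ncard := by
  have hsum := J.spanningCoe.two_mul_ncard_eq_ncard_adj_pairs_add (fun a _ => hJ.2 a)
    (leftSide v1 f) (T := T)
  simp only [Subgraph.spanningCoe_adj] at hsum
  have hinner : {p : V × V | J.Adj p.1 p.2 ∧ p.1 ∈ T ∧ p.2 ∈ leftSide v1 f} =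
      {p | J.Adj p.1 p.2 ∧ p.1 ∈ T ∧ p.2 ∈ T} := by
    ext p
    exact and_congr_right fun h => and_congr_right fun h1 => ⟨hTJ _ _ h h1, fun h2 => hT h2⟩
  rw [hinner, hw.ncard_adj_pairs_leaving_leftSide J hT] at hsum
  exact (Nat.even_add.1 (hsum ▸ even_two_mul _)).1 (J.spanningCoe.even_ncard_adj_pairs_mem_mem T)

theorem finite_neighborSet_left (hw : IsStarProductWitness G G1 v1 G2 v2 f g m) :
    (G1.neighborSet v1).Finite :=
  Set.finite_of_ncard_ne_zero (by rw [hw.ncard_neighborSet_left]; decide)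

theorem finite_cutNeighbors (hw : IsStarProductWitness G G1 v1 G2 v2 f g m) (J : G.Subgraph) :
    (cutNeighbors G1 v1 f g m J).Finite :=
  hw.finite_neighborSet_left.subset fun _ h => h.1

theorem ncard_cutNeighbors_le (hw : IsStarProductWitness G G1 v1 G2 v2 f g m) (J : G.Subgraph) :
    (cutNeighbors G1 v1 f g m J).ncard ≤ 3 :=
  hw.ncard_neighborSet_left ▸ Set.ncard_le_ncard (fun _ h => h.1) hw.finite_neighborSet_left

theorem ncard_cutNeighbors_eq_zero_or_two (hw : IsStarProductWitness G G1 v1 G2 v2 f g m)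
    [Finite V] {J : G.Subgraph} (hJ : IsTwoFactor G J) :
    (cutNeighbors G1 v1 f g m J).ncard = 0 ∨ (cutNeighbors G1 v1 f g m J).ncard = 2 := by
  have heven := hw.even_ncard_cutNeighbors hJ subset_rfl fun _ _ _ _ hb => hb
  rw [Set.sep_eq_self_iff_mem_true.2 fun z hz => mem_leftSide hz.1.ne'] at heven
  have := hw.ncard_cutNeighbors_le J
  obtain ⟨k, hk⟩ := heven
  omega

theorem cutNeighbors_eq_pair (hw : IsStarProductWitness G G1 v1 G2 v2 f g m) [Finite V]
    {J : G.Subgraph} (hJ : IsTwoFactor G J) {x y : V1} (hx : x ∈ cutNeighbors G1 v1 f g m J)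
    (hy : y ∈ cutNeighbors G1 v1 f g m J) (hxy : x ≠ y) :
    cutNeighbors G1 v1 f g m J = {x, y} := by
  refine (Set.eq_of_subset_of_ncard_le (Set.pair_subset hx hy) ?_
    (hw.finite_cutNeighbors J)).symm
  rw [Set.ncard_pair hxy]
  rcases hw.ncard_cutNeighbors_eq_zero_or_two hJ with h | h <;> omega

theorem exists_isTwoFactor_cutNeighbors_eq_pair (hw : IsStarProductWitness G G1 v1 G2 v2 f g m)
    [Finite V] (hpairs : TwoFactorsCoverPairs G (principalCut G1 v1 f g m))
    {x y : V1} (hx : G1.Adj v1 x) (hy : G1.Adj v1 y) (hxy : x ≠ y) :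
    ∃ K : G.Subgraph, IsTwoFactor G K ∧ cutNeighbors G1 v1 f g m K = {x, y} := by
  obtain ⟨K, hK, hxK, hyK⟩ := hpairs _ ⟨x, hx, rfl⟩ _ ⟨y, hy, rfl⟩
    fun h => hxy (hw.injOn_cutEdge hx hy h)
  exact ⟨K, hK, hw.cutNeighbors_eq_pair hK ⟨hx, hxK⟩ ⟨hy, hyK⟩ hxy⟩

theorem ncard_cutNeighbors_color_add (hw : IsStarProductWitness G G1 v1 G2 v2 f g m) [Finite V]
    (C : G.Coloring (Fin 2)) {J : G.Subgraph} (hJ : IsTwoFactor G J) :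
    {z ∈ cutNeighbors G1 v1 f g m J | C (f z) = 0}.ncard +
        2 * (leftSide v1 f ∩ {a | C a = 1}).ncard =
      {z ∈ cutNeighbors G1 v1 f g m J | C (f z) = 1}.ncard +
        2 * (leftSide v1 f ∩ {a | C a = 0}).ncard := by
  have hclass : ∀ k : Fin 2, 2 * (leftSide v1 f ∩ {a | C a = k}).ncard =
      {p : V × V | J.Adj p.1 p.2 ∧ p.1 ∈ leftSide v1 f ∧ C p.1 = k ∧ p.2 ∈ leftSide v1 f}.ncard +
        {z ∈ cutNeighbors G1 v1 f g m J | C (f z) = k}.ncard := fun k => by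
    rw [J.spanningCoe.two_mul_ncard_eq_ncard_adj_pairs_add (fun a _ => hJ.2 a) (leftSide v1 f)]
    simp only [Subgraph.spanningCoe_adj]
    rw [hw.ncard_adj_pairs_leaving_leftSide J Set.inter_subset_left]
    congr 2
    · ext p
      simp only [Set.mem_inter_iff, Set.mem_ofPred_eq, and_assoc]
    · ext z
      exact and_congr_right fun hz => and_iff_right (mem_leftSide hz.1.ne')
  have hswap : {p : V × V | J.Adj p.1 p.2 ∧ p.1 ∈ leftSide v1 f ∧ C p.1 = 0 ∧
      p.2 ∈ leftSide v1 f}.ncard =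
      {p : V × V | J.Adj p.1 p.2 ∧ p.1 ∈ leftSide v1 f ∧ C p.1 = 1 ∧ p.2 ∈ leftSide v1 f}.ncard :=
    Coloring.ncard_adj_pairs_color_eq (C.comp J.spanningHom) (leftSide v1 f)
  have h0 := hclass 0
  have h1 := hclass 1
  omega

theorem color_ne_of_cutNeighbors_eq_empty (hw : IsStarProductWitness G G1 v1 G2 v2 f g m)
    [Finite V] (C : G.Coloring (Fin 2))
    (hpairs : TwoFactorsCoverPairs G (principalCut G1 v1 f g m))
    {J : G.Subgraph} (hJ : IsTwoFactor G J) (hempty : cutNeighbors G1 v1 f g m J = ∅)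
    {x y : V1} (hx : G1.Adj v1 x) (hy : G1.Adj v1 y) (hxy : x ≠ y) : C (f x) ≠ C (f y) := by
  intro hC
  have hbal := hw.ncard_cutNeighbors_color_add C hJ
  simp only [hempty, Set.sep_empty, Set.ncard_empty, zero_add] at hbal
  obtain ⟨K, hK, hKcut⟩ := hw.exists_isTwoFactor_cutNeighbors_eq_pair hpairs hx hy hxy
  have hbalK := hw.ncard_cutNeighbors_color_add C hK
  have hall : ∀ k, C (f x) = k → {z ∈ ({x, y} : Set V1) | C (f z) = k} = {x, y} :=
    fun k hk => Set.sep_eq_self_iff_mem_true.2 <| by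
      rintro z (rfl | rfl); exacts [hk, hC.symm.trans hk]
  have hnone : ∀ k, C (f x) ≠ k → {z ∈ ({x, y} : Set V1) | C (f z) = k} = ∅ :=
    fun k hk => Set.sep_eq_empty_iff_mem_false.2 <| by
      rintro z (rfl | rfl); exacts [hk, fun h => hk (hC.trans h)]
  rw [hKcut] at hbalK
  rcases (by omega : C (f x) = 0 ∨ C (f x) = 1) with h | h
  · rw [hall 0 h, hnone 1 (by rw [h]; decide)] at hbalK
    rw [Set.ncard_pair hxy, Set.ncard_empty] at hbalK
    omega
  · rw [hall 1 h, hnone 0 (by rw [h]; decide)] at hbalK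
    rw [Set.ncard_pair hxy, Set.ncard_empty] at hbalK
    omega

theorem ncard_cutNeighbors_eq_two (hw : IsStarProductWitness G G1 v1 G2 v2 f g m) [Finite V]
    (hGb : G.Colorable 2)
    (hpairs : TwoFactorsCoverPairs G (principalCut G1 v1 f g m))
    {J : G.Subgraph} (hJ : IsTwoFactor G J) : (cutNeighbors G1 v1 f g m J).ncard = 2 := by
  obtain ⟨C⟩ := hGb
  refine (hw.ncard_cutNeighbors_eq_zero_or_two hJ).resolve_left fun h0 => ?_
  have hne : ∀ {x y}, G1.Adj v1 x → G1.Adj v1 y → x ≠ y → C (f x) ≠ C (f y) :=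
    hw.color_ne_of_cutNeighbors_eq_empty C hpairs hJ
      ((Set.ncard_eq_zero (hw.finite_cutNeighbors J)).1 h0)
  obtain ⟨x, y, z, hxy, hxz, hyz, hN⟩ := Set.ncard_eq_three.1 hw.ncard_neighborSet_left
  have hadj : ∀ w ∈ ({x, y, z} : Set V1), G1.Adj v1 w := fun w hw =>
    (mem_neighborSet _ _ _).1 (hN ▸ hw)
  exact (by decide : ∀ a b c : Fin 2, a ≠ b → a ≠ c → b ≠ c → False) _ _ _
    (hne (hadj x (by simp)) (hadj y (by simp)) hxy) (hne (hadj x (by simp)) (hadj z (by simp)) hxz)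
    (hne (hadj y (by simp)) (hadj z (by simp)) hyz)

theorem connected_of_connected_glue (hw : IsStarProductWitness G G1 v1 G2 v2 f g m)
    {F1 : G1.Subgraph} {K : G.Subgraph} (hF1 : IsTwoFactor G1 F1)
    (hcut : F1.neighborSet v1 = cutNeighbors G1 v1 f g m K) (h : (hw.glue F1 K).Connected) :
    F1.Connected := by
  classical
  have : Nonempty V1 := ⟨v1⟩
  let r : V → V1 := fun a => if a ∈ leftSide v1 f then Function.invFunOn f {x | x ≠ v1} a else v1
  have hrf : ∀ u, u ≠ v1 → r (f u) = u := fun u hu => by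
    simp only [r, if_pos (mem_leftSide hu)]
    exact hw.injOn_left.leftInvOn_invFunOn hu
  have hrg : ∀ a, a ∉ leftSide v1 f → r a = v1 := fun a ha => if_neg ha
  have hcross : ∀ a b, K.Adj a b → a ∈ leftSide v1 f → b ∉ leftSide v1 f →
      F1.Adj (r a) (r b) := by
    rintro _ b hab ⟨u, hu, rfl⟩ hb
    obtain ⟨hu1, rfl⟩ := (hw.adj_left_iff_of_notMem hu hb).1 (K.adj_sub hab)
    have hv1u : u ∈ F1.neighborSet v1 := hcut ▸ ⟨hu1, hab⟩
    rw [hrf u hu, hrg _ hb]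
    exact F1.adj_symm hv1u
  rw [hF1.1.connected_iff]
  refine ((Subgraph.IsSpanning.connected_iff (H := hw.glue F1 K) fun _ => trivial).1 h
    ).of_surjective_adj_or_eq r ?_ fun u => ?_
  · rintro a b (⟨u, u', hu, hu', hadj, rfl, rfl⟩ | ⟨hab, hout⟩)
    · rw [hrf u hu, hrf u' hu']
      exact Or.inl hadj
    by_cases ha : a ∈ leftSide v1 f <;> by_cases hb : b ∈ leftSide v1 f
    · exact absurd hout (not_or.2 ⟨not_not.2 ha, not_not.2 hb⟩)
    · exact Or.inl (hcross a b hab ha hb)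
    · exact Or.inl (F1.adj_symm (hcross b a hab.symm hb ha))
    · exact Or.inr ((hrg a ha).trans (hrg b hb).symm)
  · by_cases hu : u = v1
    · obtain ⟨x, hx⟩ : (F1.neighborSet v1).Nonempty :=
        Set.nonempty_of_ncard_ne_zero (by rw [hF1.2 v1]; decide)
      exact ⟨g (m x), (hrg _ (hw.g_notMem_leftSide (hw.m_ne (F1.adj_sub hx)))).trans hu.symm⟩
    · exact ⟨f u, hrf u hu⟩

theorem isTwoFactorHamiltonian_left (hw : IsStarProductWitness G G1 v1 G2 v2 f g m) [Finite V]
    (hpairs : TwoFactorsCoverPairs G (principalCut G1 v1 f g m))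
    (hG : IsTwoFactorHamiltonian G) : IsTwoFactorHamiltonian G1 := by
  intro F1 hF1
  obtain ⟨x, y, hxy, hN⟩ := Set.ncard_eq_two.1 (hF1.2 v1)
  have hx : G1.Adj v1 x := F1.adj_sub (show x ∈ F1.neighborSet v1 by rw [hN]; exact Or.inl rfl)
  have hy : G1.Adj v1 y := F1.adj_sub (show y ∈ F1.neighborSet v1 by rw [hN]; exact Or.inr rfl)
  obtain ⟨K, hK, hKcut⟩ := hw.exists_isTwoFactor_cutNeighbors_eq_pair hpairs hx hy hxy
  have hcut := hN.trans hKcut.symm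
  exact hw.connected_of_connected_glue hF1 hcut (hG _ (hw.isTwoFactor_glue hF1 hK hcut))

theorem exists_symm (hw : IsStarProductWitness G G1 v1 G2 v2 f g m) :
    ∃ m' : V2 → V1, IsStarProductWitness G G2 v2 G1 v1 g f m' ∧
      principalCut G2 v2 g f m' = principalCut G1 v1 f g m := by
  obtain ⟨h1, h2, hf, hg, hfg, hcover, hm, hadj⟩ := hw
  have : Nonempty V1 := ⟨v1⟩
  have hinv := hm.invOn_invFunOn
  refine ⟨Function.invFunOn m (G1.neighborSet v1), ⟨h2, h1, hg, hf,
    fun y x hy hx h => hfg x y hx hy h.symm, fun v => (hcover v).symm, hm.symm hinv.symm,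
    fun a b => ?_⟩, ?_⟩
  · rw [hadj a b, or_left_comm]
    refine or_congr_right (or_congr_right ⟨?_, ?_⟩)
    · rintro ⟨z, hz, h⟩
      refine ⟨m z, hm.mapsTo hz, ?_⟩
      rw [hinv.1 hz]
      tauto
    · rintro ⟨t, ht, h⟩
      refine ⟨_, (hm.symm hinv.symm).mapsTo ht, ?_⟩
      rw [hinv.2 ht]
      tauto
  · ext e
    constructor
    · rintro ⟨t, ht, rfl⟩
      exact ⟨_, (hm.symm hinv.symm).mapsTo ht, by rw [hinv.2 ht, Sym2.eq_swap]⟩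
    · rintro ⟨z, hz, rfl⟩
      exact ⟨m z, hm.mapsTo hz, by rw [hinv.1 hz, Sym2.eq_swap]⟩

/-- The cycle of `H` through `f x` contains the cut edge at `x`, so by parity also the other one. -/
theorem reachable_of_mem_principalCut (hw : IsStarProductWitness G G1 v1 G2 v2 f g m) [Finite V]
    {H : G.Subgraph} (hH : IsTwoFactor G H) {x y : V1} (hxy : x ≠ y)
    (hcut : cutNeighbors G1 v1 f g m H = {x, y}) :
    ∀ e ∈ principalCut G1 v1 f g m ∩ H.edgeSet, ∀ a ∈ e, H.spanningCoe.Reachable (f x) a := by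
  have hx : x ∈ cutNeighbors G1 v1 f g m H := hcut ▸ Or.inl rfl
  have hfy : H.spanningCoe.Reachable (f x) (f y) := by
    by_contra hfy
    let T := leftSide v1 f ∩ {a | H.spanningCoe.Reachable (f x) a}
    have heven := hw.even_ncard_cutNeighbors hH (T := T) Set.inter_subset_left
      fun a b hab ha hb => ⟨hb, ha.2.trans (Adj.reachable hab)⟩
    have hsingle : {z ∈ cutNeighbors G1 v1 f g m H | f z ∈ T} = {x} := by
      rw [hcut]
      ext z
      constructor
      · rintro ⟨rfl | rfl, -, hz⟩
        · rfl
        · exact absurd hz hfy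
      · rintro rfl
        exact ⟨Or.inl rfl, mem_leftSide hx.1.ne', Reachable.refl _⟩
    rw [hsingle, Set.ncard_singleton] at heven
    exact Nat.not_even_one heven
  rintro _ ⟨⟨z, hz, rfl⟩, hzH⟩ a ha
  have hfz : H.spanningCoe.Reachable (f x) (f z) := by
    rcases (hcut ▸ ⟨hz, hzH⟩ : z ∈ ({x, y} : Set V1)) with rfl | rfl
    exacts [Reachable.refl _, hfy]
  rcases Sym2.mem_iff.1 ha with rfl | rfl
  exacts [hfz, hfz.trans (Adj.reachable hzH)]

theorem isTwoFactorHamiltonian_of_left_right (hw : IsStarProductWitness G G1 v1 G2 v2 f g m)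
    [Finite V] {m' : V2 → V1} (hw' : IsStarProductWitness G G2 v2 G1 v1 g f m')
    (hcut' : principalCut G2 v2 g f m' = principalCut G1 v1 f g m)
    (h2 : ∀ J : G.Subgraph, IsTwoFactor G J → (cutNeighbors G1 v1 f g m J).ncard = 2)
    (hG1 : IsTwoFactorHamiltonian G1) (hG2 : IsTwoFactorHamiltonian G2) :
    IsTwoFactorHamiltonian G := by
  intro H hH
  obtain ⟨x, y, hxy, hcut⟩ := Set.ncard_eq_two.1 (h2 H hH)
  have hreach := hw.reachable_of_mem_principalCut hH hxy hcut
  have h2' : (cutNeighbors G2 v2 g f m' H).ncard = 2 := by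
    rw [hw'.ncard_cutNeighbors_eq, hcut', ← hw.ncard_cutNeighbors_eq, h2 H hH]
  have hleft := reachable_of_connected_leftPart (hG1 _ (hw.isTwoFactor_leftPart hH (h2 H hH)))
    hreach
  have hright := reachable_of_connected_leftPart (hG2 _ (hw'.isTwoFactor_leftPart hH h2'))
    (hcut' ▸ hreach)
  rw [hH.1.connected_iff, connected_iff_exists_forall_reachable]
  refine ⟨f x, fun a => ?_⟩
  rcases hw.exists_left_or_right a with ⟨u, hu, rfl⟩ | ⟨t, ht, rfl⟩
  exacts [hleft u hu, hright t ht]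

end IsStarProductWitness

end

theorem starProduct_twoFactorHamiltonian_iff_of_pairs_general {V V1 V2 : Type*}
    [Fintype V]
    (G : SimpleGraph V) (G1 : SimpleGraph V1) (v1 : V1) (G2 : SimpleGraph V2) (v2 : V2)
    (f : V1 → V) (g : V2 → V) (m : V1 → V2)
    (hw : IsStarProductWitness G G1 v1 G2 v2 f g m)
    (hGb : G.Colorable 2)
    (hpairs : ∀ e ∈ principalCut G1 v1 f g m, ∀ e' ∈ principalCut G1 v1 f g m, e ≠ e' →
      ∃ H : G.Subgraph, IsTwoFactor G H ∧ e ∈ H.edgeSet ∧ e' ∈ H.edgeSet) :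
    IsTwoFactorHamiltonian G ↔
      (IsTwoFactorHamiltonian G1 ∧ IsTwoFactorHamiltonian G2) := by
  obtain ⟨m', hw', hcut'⟩ := hw.exists_symm
  refine ⟨fun hG => ⟨hw.isTwoFactorHamiltonian_left hpairs hG,
    hw'.isTwoFactorHamiltonian_left (hcut' ▸ hpairs) hG⟩, fun ⟨hG1, hG2⟩ => ?_⟩
  exact hw.isTwoFactorHamiltonian_of_left_right hw' hcut'
    (fun J hJ => hw.ncard_cutNeighbors_eq_two hGb hpairs hJ) hG1 hG2

/-- Let `G` be a bipartite graph that can be represented as the star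
product `(G1,v1)*(G2,v2)`, and suppose that any two edges of the principal 3-edge cut of
`G` occur together in some 2-factor of `G`. Then `G` is 2-factor Hamiltonian if and only
if both `G1` and `G2` are 2-factor Hamiltonian. -/
theorem starProduct_twoFactorHamiltonian_iff_of_pairs {V V1 V2 : Type*}
    [Fintype V] [Fintype V1] [Fintype V2]
    (G : SimpleGraph V) (G1 : SimpleGraph V1) (v1 : V1) (G2 : SimpleGraph V2) (v2 : V2)
    (f : V1 → V) (g : V2 → V) (m : V1 → V2)
    (hw : IsStarProductWitness G G1 v1 G2 v2 f g m)
    (hGb : G.Colorable 2)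
    (hpairs : ∀ e ∈ principalCut G1 v1 f g m, ∀ e' ∈ principalCut G1 v1 f g m, e ≠ e' →
      ∃ H : G.Subgraph, IsTwoFactor G H ∧ e ∈ H.edgeSet ∧ e' ∈ H.edgeSet) :
    IsTwoFactorHamiltonian G ↔
      (IsTwoFactorHamiltonian G1 ∧ IsTwoFactorHamiltonian G2) :=
  starProduct_twoFactorHamiltonian_iff_of_pairs_general G G1 v1 G2 v2 f g m hw hGb hpairs
end

section
/- Let G = (G1,v1)*(G2,v2) be a cubic, bridgeless graph. Then both G1 and G2 are bridgeless. -/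
open SimpleGraph

/-!
Contracting the `G2`-side of `G` to a single vertex yields `G1`, and no parallel edges arise
because the three matching edges end at distinct neighbours of `v1`. Hence every edge cut of
`G1` pulls back to an edge cut of `G` with the same number of edges. A bridgeless graph has
no cut with at most one edge between nonempty sides, so neither does `G1`; by symmetry of the
star product the same holds for `G2`.
-/

section Cuts

variable {V W : Type*} {G : SimpleGraph V}

lemma mk_mem_edgeCut_iff {X : Set V} {a b : V} :
    s(a, b) ∈ edgeCut G X ↔ G.Adj a b ∧ (a ∈ X ∧ b ∉ X ∨ b ∈ X ∧ a ∉ X) := by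
  simp only [edgeCut, Set.mem_ofPred_eq, mem_edgeSet, Sym2.eq_iff]
  constructor
  · rintro ⟨hab, u, w, ⟨rfl, rfl⟩ | ⟨rfl, rfl⟩, hu, hw⟩ <;> tauto
  · rintro ⟨hab, ⟨ha, hb⟩ | ⟨hb, ha⟩⟩
    · exact ⟨hab, a, b, .inl ⟨rfl, rfl⟩, ha, hb⟩
    · exact ⟨hab, b, a, .inr ⟨rfl, rfl⟩, hb, ha⟩

lemma SimpleGraph.isBridge_iff_exists_edgeCut_subset {u v : V} :
    G.IsBridge s(u, v) ↔ ∃ X : Set V, u ∈ X ∧ v ∉ X ∧ edgeCut G X ⊆ {s(u, v)} := by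
  rw [isBridge_iff]
  constructor
  · intro huv
    refine ⟨{w | (G.deleteEdges {s(u, v)}).Reachable u w}, .rfl, huv, ?_⟩
    intro e he
    induction e using Sym2.ind with
    | _ a b =>
      by_contra hne
      obtain ⟨hab, ⟨ha, hb⟩ | ⟨hb, ha⟩⟩ := mk_mem_edgeCut_iff.mp he
      · exact hb (ha.trans (deleteEdges_adj.mpr ⟨hab, hne⟩).reachable)
      · have hne' : s(b, a) ∉ ({s(u, v)} : Set (Sym2 V)) := by rwa [Sym2.eq_swap (a := b)]
        exact ha (hb.trans (deleteEdges_adj.mpr ⟨hab.symm, hne'⟩).reachable)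
  · rintro ⟨X, hu, hv, hX⟩ ⟨p⟩
    obtain ⟨d, -, hd₁, hd₂⟩ := p.exists_boundary_dart X hu hv
    obtain ⟨hadj, hne⟩ := deleteEdges_adj.mp d.adj
    exact hne (hX (mk_mem_edgeCut_iff.mpr ⟨hadj, .inl ⟨hd₁, hd₂⟩⟩))

lemma bridgeless_iff_edgeCut_nontrivial :
    Bridgeless G ↔ ∀ X : Set V, X.Nonempty → Xᶜ.Nonempty → (edgeCut G X).Nontrivial := by
  constructor
  · rintro hG X ⟨u, hu⟩ ⟨v, hv⟩
    by_contra hX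
    rcases (Set.not_nontrivial_iff.mp hX).eq_empty_or_singleton with hX | ⟨e, hX⟩
    · exact hG s(u, v)
        (isBridge_iff_exists_edgeCut_subset.mpr ⟨X, hu, hv, hX ▸ Set.empty_subset _⟩)
    · have he : e ∈ edgeCut G X := hX ▸ rfl
      obtain ⟨-, a, b, rfl, ha, hb⟩ := he
      exact hG s(a, b) (isBridge_iff_exists_edgeCut_subset.mpr ⟨X, ha, hb, hX.subset⟩)
  · intro hG e
    induction e using Sym2.ind with
    | _ u v =>
      rw [isBridge_iff_exists_edgeCut_subset]
      rintro ⟨X, hu, hv, hX⟩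
      exact (hG X ⟨u, hu⟩ ⟨v, hv⟩).not_subset_singleton hX

/-- Bridgelessness survives contracting the fibres of `π`, as long as no parallel edges
arise. -/
lemma Bridgeless.of_contraction {H : SimpleGraph W} (π : V → W) (hπ : Function.Surjective π)
    (hmaps : Set.MapsTo (Sym2.map π) {e ∈ G.edgeSet | ¬(e.map π).IsDiag} H.edgeSet)
    (hinj : Set.InjOn (Sym2.map π) {e ∈ G.edgeSet | ¬(e.map π).IsDiag})
    (hG : Bridgeless G) : Bridgeless H := by
  rw [bridgeless_iff_edgeCut_nontrivial] at hG ⊢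
  intro X hX hXc
  have hsub : edgeCut G (π ⁻¹' X) ⊆ {e ∈ G.edgeSet | ¬(e.map π).IsDiag} := by
    intro e he
    induction e using Sym2.ind with
    | _ a b =>
      obtain ⟨hab, hcross⟩ := mk_mem_edgeCut_iff.mp he
      refine ⟨hab, ?_⟩
      rw [Sym2.map_mk, Sym2.mk_isDiag_iff]
      intro h
      simp only [Set.mem_preimage, h] at hcross
      tauto
  have himage : Sym2.map π '' edgeCut G (π ⁻¹' X) ⊆ edgeCut H X := by
    rintro _ ⟨e, he, rfl⟩
    have hH := hmaps (hsub he)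
    induction e using Sym2.ind with
    | _ a b =>
      rw [Sym2.map_mk, mk_mem_edgeCut_iff]
      exact ⟨hH, (mk_mem_edgeCut_iff.mp he).2⟩
  exact ((hG _ (hX.preimage hπ) (hXc.preimage hπ)).image_of_injOn (hinj.mono hsub)).mono himage

end Cuts

open Classical in
/-- The projection of a star product `G` onto `G1`, contracting the `G2`-side to `v1`. -/
noncomputable def starContract {V V1 : Type*} (f : V1 → V) (v1 : V1) (v : V) : V1 :=
  if h : ∃ x, x ≠ v1 ∧ f x = v then h.choose else v1

namespace IsStarProductWitness

variable {V V1 V2 : Type*} {G : SimpleGraph V} {G1 : SimpleGraph V1} {v1 : V1}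
  {G2 : SimpleGraph V2} {v2 : V2} {f : V1 → V} {g : V2 → V} {m : V1 → V2}

lemma starContract_left (hw : IsStarProductWitness G G1 v1 G2 v2 f g m) ⦃x : V1⦄
    (hx : x ≠ v1) : starContract f v1 (f x) = x := by
  obtain ⟨-, -, hf, -⟩ := hw
  have h : ∃ x', x' ≠ v1 ∧ f x' = f x := ⟨x, hx, rfl⟩
  rw [starContract, dif_pos h]
  exact hf h.choose_spec.1 hx h.choose_spec.2

lemma starContract_right (hw : IsStarProductWitness G G1 v1 G2 v2 f g m) ⦃y : V2⦄
    (hy : y ≠ v2) : starContract f v1 (g y) = v1 := by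
  obtain ⟨-, -, -, -, hfg, -⟩ := hw
  rw [starContract, dif_neg]
  rintro ⟨x, hx, hxy⟩
  exact hfg x y hx hy hxy

lemma surjective_starContract (hw : IsStarProductWitness G G1 v1 G2 v2 f g m) :
    Function.Surjective (starContract f v1) := by
  intro x
  by_cases hx : x = v1
  · have hr := hw.starContract_right
    obtain ⟨-, h2, -⟩ := hw
    obtain ⟨y, hy⟩ : (G2.neighborSet v2).Nonempty :=
      Set.nonempty_of_ncard_ne_zero (by rw [h2]; norm_num)
    exact ⟨g y, hx ▸ hr hy.ne'⟩
  · exact ⟨f x, hw.starContract_left hx⟩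

lemma exists_eq_of_mem_edgeSet (hw : IsStarProductWitness G G1 v1 G2 v2 f g m) {e : Sym2 V}
    (he : e ∈ G.edgeSet) (hd : ¬(e.map (starContract f v1)).IsDiag) :
    (∃ x y, x ≠ v1 ∧ y ≠ v1 ∧ G1.Adj x y ∧ e = s(f x, f y) ∧
      e.map (starContract f v1) = s(x, y)) ∨
    ∃ x, G1.Adj v1 x ∧ e = s(f x, g (m x)) ∧ e.map (starContract f v1) = s(x, v1) := by
  have hl := hw.starContract_left
  have hr := hw.starContract_right
  obtain ⟨-, -, -, -, -, -, hm, hE⟩ := hw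
  induction e using Sym2.ind with
  | _ a b =>
    rcases (hE a b).mp he with ⟨x, y, hx, hy, hxy, rfl, rfl⟩ |
      ⟨x, y, hx, hy, -, rfl, rfl⟩ | ⟨x, hx, ⟨rfl, rfl⟩ | ⟨rfl, rfl⟩⟩
    · exact .inl ⟨x, y, hx, hy, hxy, rfl, by rw [Sym2.map_mk, hl hx, hl hy]⟩
    · simp [hr hx, hr hy] at hd
    · exact .inr ⟨x, hx, rfl, by
        rw [Sym2.map_mk, hl hx.ne', hr (hm.mapsTo hx).ne']⟩
    · exact .inr ⟨x, hx, Sym2.eq_swap, by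
        rw [Sym2.map_mk, hl hx.ne', hr (hm.mapsTo hx).ne', Sym2.eq_swap]⟩

lemma mapsTo_starContract (hw : IsStarProductWitness G G1 v1 G2 v2 f g m) :
    Set.MapsTo (Sym2.map (starContract f v1))
      {e ∈ G.edgeSet | ¬(e.map (starContract f v1)).IsDiag} G1.edgeSet := by
  rintro e ⟨he, hd⟩
  rcases hw.exists_eq_of_mem_edgeSet he hd with ⟨x, y, -, -, hxy, -, hπ⟩ | ⟨x, hx, -, hπ⟩
  · rwa [hπ]
  · rw [hπ]
    exact hx.symm

lemma injOn_starContract (hw : IsStarProductWitness G G1 v1 G2 v2 f g m) :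
    Set.InjOn (Sym2.map (starContract f v1))
      {e ∈ G.edgeSet | ¬(e.map (starContract f v1)).IsDiag} := by
  rintro e ⟨he, hd⟩ e' ⟨he', hd'⟩ heq
  rcases hw.exists_eq_of_mem_edgeSet he hd with
    ⟨x, y, hx, hy, -, rfl, hπ⟩ | ⟨x, hx, rfl, hπ⟩ <;>
  rcases hw.exists_eq_of_mem_edgeSet he' hd' with
    ⟨x', y', hx', hy', -, rfl, hπ'⟩ | ⟨x', hx', rfl, hπ'⟩ <;>
  rw [hπ, hπ'] at heq
  · simpa only [Sym2.map_mk] using congrArg (Sym2.map f) heq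
  · have hv1 := Sym2.mem_iff.mp (heq ▸ Sym2.mem_mk_right x' v1)
    exact (hv1.elim (hx ·.symm) (hy ·.symm)).elim
  · have hv1 := Sym2.mem_iff.mp (heq.symm ▸ Sym2.mem_mk_right x v1)
    exact (hv1.elim (hx' ·.symm) (hy' ·.symm)).elim
  · rw [Sym2.congr_left.mp heq]

end IsStarProductWitness

namespace IsStarProduct

variable {V V1 V2 : Type*} {G : SimpleGraph V} {G1 : SimpleGraph V1} {v1 : V1}
  {G2 : SimpleGraph V2} {v2 : V2}

lemma symm (hsp : IsStarProduct G G1 v1 G2 v2) : IsStarProduct G G2 v2 G1 v1 := by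
  obtain ⟨f, g, m, h1, h2, hf, hg, hfg, hcov, hm, hE⟩ := hsp
  have : Nonempty V1 := ⟨v1⟩
  have hinv := hm.invOn_invFunOn
  have hm' := hm.symm hinv.symm
  refine ⟨g, f, Function.invFunOn m (G1.neighborSet v1), h2, h1, hg, hf,
    fun y x hy hx h => hfg x y hx hy h.symm, fun v => (hcov v).symm, hm', fun a b => ?_⟩
  rw [hE, or_left_comm]
  refine or_congr_right (or_congr_right ⟨?_, ?_⟩)
  · rintro ⟨x, hx, h⟩
    refine ⟨m x, hm.mapsTo hx, ?_⟩
    rw [hinv.1 hx]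
    tauto
  · rintro ⟨y, hy, h⟩
    refine ⟨_, hm'.mapsTo hy, ?_⟩
    rw [hinv.2 hy]
    tauto

lemma bridgeless_left (hsp : IsStarProduct G G1 v1 G2 v2) (hG : Bridgeless G) :
    Bridgeless G1 := by
  obtain ⟨f, g, m, hw⟩ := hsp
  exact hG.of_contraction _ hw.surjective_starContract hw.mapsTo_starContract
    hw.injOn_starContract

end IsStarProduct

theorem starProduct_bridgeless_general {V V1 V2 : Type*}
    (G : SimpleGraph V) (G1 : SimpleGraph V1) (v1 : V1) (G2 : SimpleGraph V2) (v2 : V2)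
    (hsp : IsStarProduct G G1 v1 G2 v2)
    (hGbl : Bridgeless G) :
    Bridgeless G1 ∧ Bridgeless G2 :=
  ⟨hsp.bridgeless_left hGbl, hsp.symm.bridgeless_left hGbl⟩

/-- Let `G = (G1,v1)*(G2,v2)` be a cubic, bridgeless graph. Then both
`G1` and `G2` are bridgeless. -/
theorem starProduct_bridgeless {V V1 V2 : Type*}
    [Fintype V] [Fintype V1] [Fintype V2]
    (G : SimpleGraph V) (G1 : SimpleGraph V1) (v1 : V1) (G2 : SimpleGraph V2) (v2 : V2)
    (hsp : IsStarProduct G G1 v1 G2 v2)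
    (hGc : IsCubic G) (hGbl : Bridgeless G) :
    Bridgeless G1 ∧ Bridgeless G2 :=
  starProduct_bridgeless_general G G1 v1 G2 v2 hsp hGbl
end

section
/- Let B be a brace that is the trisum of three braces B1, B2, B3 at a 4-cycle C, and suppose that for each i ∈ {1,2,3} the graph Bi contains a 4-cycle C^i that is edge-disjoint from C. Then B contains three pairwise edge-disjoint 4-cycles, and for every 4-cycle H in B there exists a 4-cycle in B that is edge-disjoint from H. -/
open SimpleGraph

/-- The edge set of the 4-cycle on the vertices `a, b, c, d` (in this cyclic order). -/
def fourCycleEdges {V : Type*} (a b c d : V) : Set (Sym2 V) :=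
  {s(a, b), s(b, c), s(c, d), s(d, a)}

/-- The subgraph `H` (of the complete graph on `V`) contains the 4-cycle
`a — b — c — d — a`. -/
def HasFourCycle {V : Type*} (H : (⊤ : SimpleGraph V).Subgraph) (a b c d : V) : Prop :=
  a ≠ b ∧ a ≠ c ∧ a ≠ d ∧ b ≠ c ∧ b ≠ d ∧ c ≠ d ∧
    H.Adj a b ∧ H.Adj b c ∧ H.Adj c d ∧ H.Adj d a

/-- The subgraph `C` is exactly the 4-cycle on the vertices `a, b, c, d`. -/
def IsFourCycleSubgraph {V : Type*} (C : (⊤ : SimpleGraph V).Subgraph) (a b c d : V) : Prop :=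
  a ≠ b ∧ a ≠ c ∧ a ≠ d ∧ b ≠ c ∧ b ≠ d ∧ c ≠ d ∧
    C.verts = {a, b, c, d} ∧
    ∀ u v : V, C.Adj u v ↔ s(u, v) ∈ fourCycleEdges a b c d

lemma mem_fce_iff {V : Type*} {e : Sym2 V} {a b c d : V} :
    e ∈ fourCycleEdges a b c d ↔ e = s(a,b) ∨ e = s(b,c) ∨ e = s(c,d) ∨ e = s(d,a) := by
  simp [fourCycleEdges]

lemma fce_mem₁ {V : Type*} (a b c d : V) : s(a,b) ∈ fourCycleEdges a b c d := by
  simp [fourCycleEdges]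
lemma fce_mem₂ {V : Type*} (a b c d : V) : s(b,c) ∈ fourCycleEdges a b c d := by
  simp [fourCycleEdges]
lemma fce_mem₃ {V : Type*} (a b c d : V) : s(c,d) ∈ fourCycleEdges a b c d := by
  simp [fourCycleEdges]
lemma fce_mem₄ {V : Type*} (a b c d : V) : s(d,a) ∈ fourCycleEdges a b c d := by
  simp [fourCycleEdges]

lemma fce_mem₁' {V : Type*} (a b c d : V) : s(b,a) ∈ fourCycleEdges a b c d := by
  simp [fourCycleEdges, Sym2.eq_iff]
lemma fce_mem₂' {V : Type*} (a b c d : V) : s(c,b) ∈ fourCycleEdges a b c d := by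
  simp [fourCycleEdges, Sym2.eq_iff]
lemma fce_mem₃' {V : Type*} (a b c d : V) : s(d,c) ∈ fourCycleEdges a b c d := by
  simp [fourCycleEdges, Sym2.eq_iff]
lemma fce_mem₄' {V : Type*} (a b c d : V) : s(a,d) ∈ fourCycleEdges a b c d := by
  simp [fourCycleEdges, Sym2.eq_iff]

lemma fce_endpoints {V : Type*} {x y a b c d : V} (h : s(x,y) ∈ fourCycleEdges a b c d) :
    (x = a ∨ x = b ∨ x = c ∨ x = d) ∧ (y = a ∨ y = b ∨ y = c ∨ y = d) := by
  rw [mem_fce_iff] at h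
  rcases h with h | h | h | h <;> rw [Sym2.eq_iff] at h <;> tauto

lemma fce_exists {V : Type*} {e : Sym2 V} {Bi : (⊤ : SimpleGraph V).Subgraph} {a b c d : V}
    (h : HasFourCycle Bi a b c d) (he : e ∈ fourCycleEdges a b c d) :
    ∃ p q, e = s(p,q) ∧ Bi.Adj p q := by
  obtain ⟨-,-,-,-,-,-,h1,h2,h3,h4⟩ := h
  rw [mem_fce_iff] at he
  rcases he with rfl | rfl | rfl | rfl
  exacts [⟨_,_,rfl,h1⟩, ⟨_,_,rfl,h2⟩, ⟨_,_,rfl,h3⟩, ⟨_,_,rfl,h4⟩]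

lemma fce_sub_edgeSet {V : Type*} {Bi : (⊤ : SimpleGraph V).Subgraph} {a b c d : V}
    (h : HasFourCycle Bi a b c d) : fourCycleEdges a b c d ⊆ Bi.edgeSet := by
  intro e he
  obtain ⟨p, q, rfl, hadj⟩ := fce_exists h he
  exact Subgraph.mem_edgeSet.2 hadj

lemma aux_nodiag {V : Type*} {Bi : (⊤ : SimpleGraph V).Subgraph} {a b c d : V}
    (hcol : Bi.coe.Colorable 2)
    (hab : Bi.Adj a b) (hbc : Bi.Adj b c) (hcd : Bi.Adj c d) (hda : Bi.Adj d a) :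
    ¬ Bi.Adj a c ∧ ¬ Bi.Adj b d := by
  obtain ⟨col⟩ := hcol
  have tri : ∀ x y z : Fin 2, x ≠ y → y ≠ z → x = z := by decide
  constructor
  · intro hac
    exact col.valid hac.coe (tri _ (col ⟨b, Bi.edge_vert hab.symm⟩) _
      (col.valid hab.coe) (col.valid hbc.coe))
  · intro hbd
    exact col.valid hbd.coe (tri _ (col ⟨c, Bi.edge_vert hbc.symm⟩) _
      (col.valid hbc.coe) (col.valid hcd.coe))

lemma aux_noadj {V : Type*} (B X Y Z C : (⊤ : SimpleGraph V).Subgraph)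
    (hXY : X.verts ∩ Y.verts ⊆ C.verts) (hXZ : X.verts ∩ Z.verts ⊆ C.verts)
    (hBadj : ∀ u v, B.Adj u v → X.Adj u v ∨ Y.Adj u v ∨ Z.Adj u v)
    {u v : V} (hu : u ∈ X.verts) (huc : u ∉ C.verts) (hv : v ∈ Y.verts) (hvc : v ∉ C.verts) :
    ¬ B.Adj u v := by
  intro h
  rcases hBadj _ _ h with h' | h' | h'
  · exact hvc (hXY ⟨X.edge_vert h'.symm, hv⟩)
  · exact huc (hXY ⟨hu, Y.edge_vert h'⟩)
  · exact huc (hXZ ⟨hu, Z.edge_vert h'⟩)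

lemma aux_twoadj {V : Type*} {B : (⊤ : SimpleGraph V).Subgraph} {a' b' c' d' v1 v2 v3 : V}
    (hH : HasFourCycle B a' b' c' d')
    (h1 : v1 = a' ∨ v1 = b' ∨ v1 = c' ∨ v1 = d')
    (h2 : v2 = a' ∨ v2 = b' ∨ v2 = c' ∨ v2 = d')
    (h3 : v3 = a' ∨ v3 = b' ∨ v3 = c' ∨ v3 = d')
    (h12 : v1 ≠ v2) (h13 : v1 ≠ v3) (h23 : v2 ≠ v3) :
    B.Adj v1 v2 ∨ B.Adj v1 v3 ∨ B.Adj v2 v3 := by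
  obtain ⟨-,-,-,-,-,-,hab,hbc,hcd,hda⟩ := hH
  have hba := hab.symm; have hcb := hbc.symm; have hdc := hcd.symm; have had := hda.symm
  rcases h1 with rfl | rfl | rfl | rfl <;> rcases h2 with rfl | rfl | rfl | rfl <;>
    rcases h3 with rfl | rfl | rfl | rfl <;> tauto

lemma aux_vertex {V : Type*} {Bi C : (⊤ : SimpleGraph V).Subgraph}
    {a b c d a1 b1 c1 d1 a' b' c' d' : V} {e : Sym2 V}
    (hCverts : C.verts = {a, b, c, d})
    (hcol : Bi.coe.Colorable 2)
    (hBab : Bi.Adj a b) (hBbc : Bi.Adj b c) (hBcd : Bi.Adj c d) (hBda : Bi.Adj d a)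
    (hCi : HasFourCycle Bi a1 b1 c1 d1)
    (hDi : Disjoint (fourCycleEdges a1 b1 c1 d1) (fourCycleEdges a b c d))
    (heCi : e ∈ fourCycleEdges a1 b1 c1 d1) (heH : e ∈ fourCycleEdges a' b' c' d') :
    ∃ v, v ∈ Bi.verts ∧ v ∉ C.verts ∧ (v = a' ∨ v = b' ∨ v = c' ∨ v = d') := by
  obtain ⟨p, q, rfl, hadj⟩ := fce_exists hCi heCi
  obtain ⟨hp', hq'⟩ := fce_endpoints heH
  by_cases hp : p ∈ C.verts
  · by_cases hq : q ∈ C.verts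
    · exfalso
      have hnot : s(p,q) ∉ fourCycleEdges a b c d := fun hx => Set.disjoint_left.1 hDi heCi hx
      obtain ⟨hd1, hd2⟩ := aux_nodiag hcol hBab hBbc hBcd hBda
      have hne := hadj.ne
      rw [hCverts] at hp hq
      simp only [Set.mem_insert_iff, Set.mem_singleton_iff] at hp hq
      rcases hp with rfl | rfl | rfl | rfl <;> rcases hq with rfl | rfl | rfl | rfl <;>
        first
          | exact hne rfl
          | exact hd1 hadj
          | exact hd1 hadj.symm
          | exact hd2 hadj
          | exact hd2 hadj.symm
          | exact hnot (fce_mem₁ _ _ _ _)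
          | exact hnot (fce_mem₂ _ _ _ _)
          | exact hnot (fce_mem₃ _ _ _ _)
          | exact hnot (fce_mem₄ _ _ _ _)
          | exact hnot (fce_mem₁' _ _ _ _)
          | exact hnot (fce_mem₂' _ _ _ _)
          | exact hnot (fce_mem₃' _ _ _ _)
          | exact hnot (fce_mem₄' _ _ _ _)
    · exact ⟨q, Bi.edge_vert hadj.symm, hq, hq'⟩
  · exact ⟨p, Bi.edge_vert hadj, hp, hp'⟩

/-- Let `B` be a brace that is the trisum of three braces
`B1, B2, B3` at a 4-cycle `C` (so the pairwise intersections of the `Bi` all equal `C`,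
each `Bi` has a vertex outside `C`, and `B = (B1 ∪ B2 ∪ B3) − S` for some set `S` of
edges of `C`), and suppose each `Bi` contains a 4-cycle edge-disjoint from `C`. Then `B`
contains three pairwise edge-disjoint 4-cycles, and for every 4-cycle `H` in `B` there is
a 4-cycle in `B` edge-disjoint from `H`. Graphs on subsets of the vertex set `V` are
modelled as subgraphs of the complete graph on `V`. -/
theorem trisum_fourCycles {V : Type*} [Fintype V]
    (B B1 B2 B3 C : (⊤ : SimpleGraph V).Subgraph) (a b c d : V)
    (hC : IsFourCycleSubgraph C a b c d)
    (hBbrace : IsBrace B.coe) (hB1 : IsBrace B1.coe) (hB2 : IsBrace B2.coe)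
    (hB3 : IsBrace B3.coe)
    (h12 : B1 ⊓ B2 = C) (h13 : B1 ⊓ B3 = C) (h23 : B2 ⊓ B3 = C)
    (hne1 : (B1.verts \ C.verts).Nonempty) (hne2 : (B2.verts \ C.verts).Nonempty)
    (hne3 : (B3.verts \ C.verts).Nonempty)
    (S : Set (Sym2 V)) (hS : S ⊆ C.edgeSet)
    (hB : B = (B1 ⊔ B2 ⊔ B3).deleteEdges S)
    (hcyc1 : ∃ a' b' c' d' : V, HasFourCycle B1 a' b' c' d' ∧
      Disjoint (fourCycleEdges a' b' c' d') (fourCycleEdges a b c d))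
    (hcyc2 : ∃ a' b' c' d' : V, HasFourCycle B2 a' b' c' d' ∧
      Disjoint (fourCycleEdges a' b' c' d') (fourCycleEdges a b c d))
    (hcyc3 : ∃ a' b' c' d' : V, HasFourCycle B3 a' b' c' d' ∧
      Disjoint (fourCycleEdges a' b' c' d') (fourCycleEdges a b c d)) :
    (∃ (a₁ b₁ c₁ d₁ a₂ b₂ c₂ d₂ a₃ b₃ c₃ d₃ : V),
      HasFourCycle B a₁ b₁ c₁ d₁ ∧ HasFourCycle B a₂ b₂ c₂ d₂ ∧
      HasFourCycle B a₃ b₃ c₃ d₃ ∧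
      Disjoint (fourCycleEdges a₁ b₁ c₁ d₁) (fourCycleEdges a₂ b₂ c₂ d₂) ∧
      Disjoint (fourCycleEdges a₁ b₁ c₁ d₁) (fourCycleEdges a₃ b₃ c₃ d₃) ∧
      Disjoint (fourCycleEdges a₂ b₂ c₂ d₂) (fourCycleEdges a₃ b₃ c₃ d₃)) ∧
    ∀ a' b' c' d' : V, HasFourCycle B a' b' c' d' →
      ∃ a'' b'' c'' d'' : V, HasFourCycle B a'' b'' c'' d'' ∧
        Disjoint (fourCycleEdges a'' b'' c'' d'') (fourCycleEdges a' b' c' d') := by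
  classical
  obtain ⟨a1, b1, c1, d1, hH1, hD1⟩ := hcyc1
  obtain ⟨a2, b2, c2, d2, hH2, hD2⟩ := hcyc2
  obtain ⟨a3, b3, c3, d3, hH3, hD3⟩ := hcyc3
  obtain ⟨-, -, -, -, -, -, hCverts, hCadj⟩ := hC
  have hCle1 : C ≤ B1 := h12 ▸ inf_le_left
  have hCle2 : C ≤ B2 := h12 ▸ inf_le_right
  have hCle3 : C ≤ B3 := h13 ▸ inf_le_right
  have hCE : C.edgeSet ⊆ fourCycleEdges a b c d := by
    intro e he
    induction e with
    | h u v => exact (hCadj u v).1 (Subgraph.mem_edgeSet.1 he)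
  -- adjacency transfer into B
  have hadjB : ∀ p q : V, (B1.Adj p q ∨ B2.Adj p q ∨ B3.Adj p q) →
      s(p,q) ∉ fourCycleEdges a b c d → B.Adj p q := by
    intro p q h hn
    rw [hB, Subgraph.deleteEdges_adj]
    refine ⟨?_, fun hs => hn (hCE (hS hs))⟩
    rw [Subgraph.sup_adj, Subgraph.sup_adj]
    tauto
  have hBadj' : ∀ u v : V, B.Adj u v → B1.Adj u v ∨ B2.Adj u v ∨ B3.Adj u v := by
    intro u v h
    rw [hB, Subgraph.deleteEdges_adj] at h
    have := h.1
    rw [Subgraph.sup_adj, Subgraph.sup_adj] at this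
    tauto
  -- lift the three cycles into B
  have hlift : ∀ (X : (⊤ : SimpleGraph V).Subgraph) (x y z w : V),
      (X = B1 ∨ X = B2 ∨ X = B3) → HasFourCycle X x y z w →
      Disjoint (fourCycleEdges x y z w) (fourCycleEdges a b c d) →
      HasFourCycle B x y z w := by
    rintro X x y z w hX ⟨n1, n2, n3, n4, n5, n6, e1, e2, e3, e4⟩ hD
    have hA : ∀ p q : V, X.Adj p q → s(p,q) ∈ fourCycleEdges x y z w → B.Adj p q := by
      intro p q hpq hm
      refine hadjB p q ?_ (fun hx => Set.disjoint_left.1 hD hm hx)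
      rcases hX with rfl | rfl | rfl
      exacts [Or.inl hpq, Or.inr (Or.inl hpq), Or.inr (Or.inr hpq)]
    exact ⟨n1, n2, n3, n4, n5, n6, hA _ _ e1 (fce_mem₁ _ _ _ _), hA _ _ e2 (fce_mem₂ _ _ _ _),
      hA _ _ e3 (fce_mem₃ _ _ _ _), hA _ _ e4 (fce_mem₄ _ _ _ _)⟩
  have hB1' : HasFourCycle B a1 b1 c1 d1 := hlift B1 _ _ _ _ (Or.inl rfl) hH1 hD1
  have hB2' : HasFourCycle B a2 b2 c2 d2 := hlift B2 _ _ _ _ (Or.inr (Or.inl rfl)) hH2 hD2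
  have hB3' : HasFourCycle B a3 b3 c3 d3 := hlift B3 _ _ _ _ (Or.inr (Or.inr rfl)) hH3 hD3
  -- edges in two of the braces lie in C
  have key : ∀ (X Y : (⊤ : SimpleGraph V).Subgraph), X ⊓ Y = C →
      ∀ e : Sym2 V, e ∈ X.edgeSet → e ∈ Y.edgeSet → e ∈ fourCycleEdges a b c d := by
    intro X Y hXY e h1 h2
    have h3 : e ∈ (X ⊓ Y).edgeSet := by
      rw [Subgraph.edgeSet_inf]; exact ⟨h1, h2⟩
    rw [hXY] at h3
    exact hCE h3
  have hd12 : Disjoint (fourCycleEdges a1 b1 c1 d1) (fourCycleEdges a2 b2 c2 d2) :=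
    Set.disjoint_left.2 fun {e} he1 he2 => absurd
      (key B1 B2 h12 e (fce_sub_edgeSet hH1 he1) (fce_sub_edgeSet hH2 he2))
      (Set.disjoint_left.1 hD1 he1)
  have hd13 : Disjoint (fourCycleEdges a1 b1 c1 d1) (fourCycleEdges a3 b3 c3 d3) :=
    Set.disjoint_left.2 fun {e} he1 he2 => absurd
      (key B1 B3 h13 e (fce_sub_edgeSet hH1 he1) (fce_sub_edgeSet hH3 he2))
      (Set.disjoint_left.1 hD1 he1)
  have hd23 : Disjoint (fourCycleEdges a2 b2 c2 d2) (fourCycleEdges a3 b3 c3 d3) :=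
    Set.disjoint_left.2 fun {e} he1 he2 => absurd
      (key B2 B3 h23 e (fce_sub_edgeSet hH2 he1) (fce_sub_edgeSet hH3 he2))
      (Set.disjoint_left.1 hD2 he1)
  refine ⟨⟨a1, b1, c1, d1, a2, b2, c2, d2, a3, b3, c3, d3,
    hB1', hB2', hB3', hd12, hd13, hd23⟩, ?_⟩
  intro a' b' c' d' hH
  by_cases h1 : Disjoint (fourCycleEdges a1 b1 c1 d1) (fourCycleEdges a' b' c' d')
  · exact ⟨a1, b1, c1, d1, hB1', h1⟩
  by_cases h2 : Disjoint (fourCycleEdges a2 b2 c2 d2) (fourCycleEdges a' b' c' d')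
  · exact ⟨a2, b2, c2, d2, hB2', h2⟩
  by_cases h3 : Disjoint (fourCycleEdges a3 b3 c3 d3) (fourCycleEdges a' b' c' d')
  · exact ⟨a3, b3, c3, d3, hB3', h3⟩
  exfalso
  rw [Set.not_disjoint_iff] at h1 h2 h3
  obtain ⟨e1, he1, he1'⟩ := h1
  obtain ⟨e2, he2, he2'⟩ := h2
  obtain ⟨e3, he3, he3'⟩ := h3
  -- the cycle edges of C, inside each brace
  have hCab : C.Adj a b := (hCadj a b).2 (fce_mem₁ _ _ _ _)
  have hCbc : C.Adj b c := (hCadj b c).2 (fce_mem₂ _ _ _ _)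
  have hCcd : C.Adj c d := (hCadj c d).2 (fce_mem₃ _ _ _ _)
  have hCda : C.Adj d a := (hCadj d a).2 (fce_mem₄ _ _ _ _)
  obtain ⟨v1, hv1B, hv1C, hv1H⟩ := aux_vertex hCverts hB1.2.1
    (hCle1.2 hCab) (hCle1.2 hCbc) (hCle1.2 hCcd) (hCle1.2 hCda) hH1 hD1 he1 he1'
  obtain ⟨v2, hv2B, hv2C, hv2H⟩ := aux_vertex hCverts hB2.2.1
    (hCle2.2 hCab) (hCle2.2 hCbc) (hCle2.2 hCcd) (hCle2.2 hCda) hH2 hD2 he2 he2'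
  obtain ⟨v3, hv3B, hv3C, hv3H⟩ := aux_vertex hCverts hB3.2.1
    (hCle3.2 hCab) (hCle3.2 hCbc) (hCle3.2 hCcd) (hCle3.2 hCda) hH3 hD3 he3 he3'
  have hV12 : B1.verts ∩ B2.verts ⊆ C.verts := by
    rw [← h12]; exact fun x hx => hx
  have hV13 : B1.verts ∩ B3.verts ⊆ C.verts := by
    rw [← h13]; exact fun x hx => hx
  have hV23 : B2.verts ∩ B3.verts ⊆ C.verts := by
    rw [← h23]; exact fun x hx => hx
  have ne12 : v1 ≠ v2 := fun h => hv1C (hV12 ⟨hv1B, h ▸ hv2B⟩)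
  have ne13 : v1 ≠ v3 := fun h => hv1C (hV13 ⟨hv1B, h ▸ hv3B⟩)
  have ne23 : v2 ≠ v3 := fun h => hv2C (hV23 ⟨hv2B, h ▸ hv3B⟩)
  have hBadj13 : ∀ u v : V, B.Adj u v → B1.Adj u v ∨ B3.Adj u v ∨ B2.Adj u v :=
    fun u v h => (hBadj' u v h).imp id Or.symm
  have hBadj23 : ∀ u v : V, B.Adj u v → B2.Adj u v ∨ B3.Adj u v ∨ B1.Adj u v :=
    fun u v h => (hBadj' u v h).elim (fun h1 => Or.inr (Or.inr h1))
      (fun h' => h'.elim Or.inl (fun h3 => Or.inr (Or.inl h3)))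
  have hV21 : B2.verts ∩ B1.verts ⊆ C.verts := fun x hx => hV12 ⟨hx.2, hx.1⟩
  rcases aux_twoadj hH hv1H hv2H hv3H ne12 ne13 ne23 with hadj | hadj | hadj
  · exact aux_noadj B B1 B2 B3 C hV12 hV13 hBadj' hv1B hv1C hv2B hv2C hadj
  · exact aux_noadj B B1 B3 B2 C hV13 hV12 hBadj13 hv1B hv1C hv3B hv3C hadj
  · exact aux_noadj B B2 B3 B1 C hV23 hV21 hBadj23 hv2B hv2C hv3B hv3C hadj
end

section
/- Let G be a 3-connected, cubic, bipartite graph with a non-trivial tight cut ∂X. Then every 2-factor of G contains exactly two edges of ∂X. -/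
/-!
A 2-factor `F` of a bipartite graph is a 2-regular bipartite graph, so by Hall's theorem it
contains a perfect matching `M`, and the edges of `F` outside `M` form a second perfect
matching. A tight cut meets each of these two matchings in exactly one edge.
-/

open SimpleGraph

namespace SimpleGraph

variable {V : Type*} {G : SimpleGraph V}

theorem Subgraph.edgeSet_deleteEdges (H : G.Subgraph) (s : Set (Sym2 V)) :
    (H.deleteEdges s).edgeSet = H.edgeSet \ s := by
  ext e
  induction e using Sym2.ind
  simp

theorem ncard_le_ncard_biUnion_neighborSet_of_regular [Finite V] {k : ℕ} (hk : 0 < k)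
    (hreg : ∀ v, (G.neighborSet v).ncard = k) (s : Set V) :
    s.ncard ≤ (⋃ x ∈ s, G.neighborSet x).ncard := by
  classical
  have := Fintype.ofFinite V
  set t := ⋃ x ∈ s, G.neighborSet x
  have hcount : s.toFinset.card * k ≤ t.toFinset.card * k := by
    refine Finset.card_mul_le_card_mul G.Adj (fun a ha => ?_) (fun b _ => ?_)
    · rw [← hreg a, Set.ncard_eq_toFinset_card']
      refine Finset.card_le_card fun b hb => ?_
      rw [Set.mem_toFinset, mem_neighborSet] at hb
      rw [Set.mem_toFinset] at ha
      simpa [Finset.mem_bipartiteAbove, t] using ⟨⟨a, ha, hb⟩, hb⟩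
    · rw [← hreg b, Set.ncard_eq_toFinset_card']
      refine Finset.card_le_card fun a ha => ?_
      rw [Finset.mem_bipartiteBelow] at ha
      simpa using ha.2.symm
  rw [Set.ncard_eq_toFinset_card', Set.ncard_eq_toFinset_card']
  exact Nat.le_of_mul_le_mul_right hcount hk

theorem IsBipartite.exists_isPerfectMatching_of_regular [Finite V] (hbip : G.IsBipartite)
    {k : ℕ} (hk : 0 < k) (hreg : ∀ v, (G.neighborSet v).ncard = k) :
    ∃ M : G.Subgraph, M.IsPerfectMatching := by
  classical
  have := Fintype.ofFinite V
  obtain ⟨s, t, hst⟩ := hbip.exists_isBipartiteWith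
  exact exists_isPerfectMatching_of_forall_ncard_le hst
    (ncard_le_ncard_biUnion_neighborSet_of_regular hk hreg)

theorem IsBipartite.exists_isPerfectMatching_le_of_regular [Finite V] (hbip : G.IsBipartite)
    {H : G.Subgraph} (hspan : H.IsSpanning) {k : ℕ} (hk : 0 < k)
    (hreg : ∀ v, (H.neighborSet v).ncard = k) :
    ∃ M : G.Subgraph, M ≤ H ∧ M.IsPerfectMatching := by
  obtain ⟨M, hM⟩ := IsBipartite.exists_isPerfectMatching_of_regular
    (hbip.mono_left H.spanningCoe_le) hk hreg
  refine ⟨toSubgraph M.spanningCoe (M.spanningCoe_le.trans H.spanningCoe_le),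
    ⟨fun v _ => hspan v, fun _ _ h => M.adj_sub h⟩,
    (Subgraph.IsPerfectMatching.toSubgraph_iff _).2 hM⟩

end SimpleGraph

theorem IsTwoFactor.isPerfectMatching_deleteEdges {V : Type*} {G : SimpleGraph V}
    {F M : G.Subgraph} (hF : IsTwoFactor G F) (hMF : M ≤ F) (hM : M.IsPerfectMatching) :
    (F.deleteEdges M.edgeSet).IsPerfectMatching := by
  refine Subgraph.isPerfectMatching_iff.2 fun v => ?_
  obtain ⟨m, hm, hm_unique⟩ := Subgraph.isPerfectMatching_iff.1 hM v
  have hrest : (F.deleteEdges M.edgeSet).neighborSet v = F.neighborSet v \ {m} := by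
    ext w
    simp only [Subgraph.mem_neighborSet, Subgraph.deleteEdges_adj, Subgraph.mem_edgeSet,
      Set.mem_sdiff, Set.mem_singleton_iff]
    exact and_congr_right fun _ => ⟨fun h hw => h (hw ▸ hm), fun h hw => h (hm_unique w hw)⟩
  obtain ⟨w, hw⟩ : ∃ w, (F.deleteEdges M.edgeSet).neighborSet v = {w} := by
    rw [← Set.ncard_eq_one, hrest,
      Set.ncard_sdiff_singleton_of_mem (show m ∈ F.neighborSet v from hMF.2 hm), hF.2 v]
  exact ⟨w, (Set.ext_iff.1 hw w).2 rfl, fun u hu => (Set.ext_iff.1 hw u).1 hu⟩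

theorem twoFactor_meets_tightCut_twice_general {V : Type*} [Fintype V]
    (G : SimpleGraph V) (X : Set V)
    (hbip : G.Colorable 2)
    (htight : IsTightCut G X) :
    ∀ F : G.Subgraph, IsTwoFactor G F → (edgeCut G X ∩ F.edgeSet).ncard = 2 := by
  intro F hF
  obtain ⟨M, hMF, hM⟩ :=
    IsBipartite.exists_isPerfectMatching_le_of_regular hbip hF.1 two_pos hF.2
  have hsplit := Set.ncard_inter_add_ncard_sdiff_eq_ncard (edgeCut G X ∩ F.edgeSet) M.edgeSet
  rw [Set.inter_assoc, Set.inter_eq_right.2 (Subgraph.edgeSet_mono hMF), Set.inter_sdiff_assoc,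
    ← Subgraph.edgeSet_deleteEdges, htight M hM,
    htight _ (hF.isPerfectMatching_deleteEdges hMF hM)] at hsplit
  omega

/-- Let `G` be a 3-connected, cubic, bipartite graph with a
non-trivial tight cut `∂X`. Then every 2-factor of `G` contains exactly two edges
of `∂X`. -/
theorem twoFactor_meets_tightCut_twice {V : Type*} [Fintype V]
    (G : SimpleGraph V) (X : Set V)
    (h3con : IsKConnected 3 G) (hcubic : IsCubic G) (hbip : G.Colorable 2)
    (htight : IsTightCut G X) (hnontriv : ¬ IsTrivialCut X) :
    ∀ F : G.Subgraph, IsTwoFactor G F → (edgeCut G X ∩ F.edgeSet).ncard = 2 :=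
  twoFactor_meets_tightCut_twice_general G X hbip htight
end

section
/- Let G be a bipartite graph with colour classes A and B that can be represented as the star product (G1,v1)*(G2,v2) with principal 3-edge cut ∂X, where X = V(G1) \ {v1}, and suppose that any two edges of ∂X occur together in some 2-factor of G. Then the three endpoints lying in X of the edges of ∂X all belong to the same colour class of G. -/
open SimpleGraph

/-!
Give each vertex the sign `+1` on `A` and `-1` on `B`. Every edge joins opposite signs, so
for a 2-factor `H` the edges of `H` inside `X` cancel in `∑_{u ∈ X} sign u * deg_H u`, and the
signed count of the edges of `H` leaving `X` equals `c = 2 * ∑_{u ∈ X} sign u`, whatever `H` is.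
Since the sign is odd, `H` meets the principal cut in an even number of edges; hence a 2-factor
through two principal edges misses the third, and the signs of their ends in `X` add up to `c`.
This holds for all three pairs among the three ends, which forces the three signs to coincide.
-/

open Finset

theorem Finset.even_sum_iff_even_card_of_odd {ι : Type*} {s : Finset ι} {a : ι → ℤ}
    (ha : ∀ i ∈ s, Odd (a i)) : Even (∑ i ∈ s, a i) ↔ Even #s := by
  rw [← ZMod.intCast_eq_zero_iff_even, ← ZMod.natCast_eq_zero_iff_even, Int.cast_sum,
    sum_congr rfl fun i hi => ZMod.intCast_eq_one_iff_odd.mpr (ha i hi), sum_const, nsmul_one]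

theorem Finset.eq_of_pair_sums_eq {α M : Type*} [AddCancelCommMonoid M] {s : Finset α}
    (hs : 3 ≤ #s) {a : α → M} {c : M}
    (h : ∀ i ∈ s, ∀ j ∈ s, i ≠ j → a i + a j = c) :
    ∀ i ∈ s, ∀ j ∈ s, a i = a j := by
  classical
  intro i hi j hj
  obtain ⟨k, hk⟩ : ((s.erase i).erase j).Nonempty := by
    have := pred_card_le_card_erase (s := s.erase i) (a := j)
    have := pred_card_le_card_erase (s := s) (a := i)
    rw [← card_pos]
    omega
  obtain ⟨hkj, hki, hks⟩ : k ≠ j ∧ k ≠ i ∧ k ∈ s := by simpa using hk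
  exact add_right_cancel ((h i hi k hks hki.symm).trans (h j hj k hks hkj.symm).symm)

theorem SimpleGraph.sum_mul_degree_eq_sum_boundary {V : Type*} [Fintype V] [DecidableEq V]
    (H : SimpleGraph V) [DecidableRel H.Adj] {s : V → ℤ}
    (hs : ∀ u w, H.Adj u w → s u + s w = 0) (X : Finset V) :
    ∑ u ∈ X, s u * H.degree u = ∑ u ∈ X, ∑ w ∈ Xᶜ, if H.Adj u w then s u else 0 := by
  have hinside : ∑ u ∈ X, ∑ w ∈ X, (if H.Adj u w then s u else 0) = 0 := by
    have hswap : ∑ u ∈ X, ∑ w ∈ X, (if H.Adj u w then s u else 0)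
        = ∑ u ∈ X, ∑ w ∈ X, if H.Adj u w then s w else 0 := by
      rw [sum_comm]
      simp only [H.adj_comm]
    have hsum : ∑ u ∈ X, ∑ w ∈ X, (if H.Adj u w then s u else 0)
        + ∑ u ∈ X, ∑ w ∈ X, (if H.Adj u w then s w else 0) = 0 := by
      simp only [← sum_add_distrib]
      exact sum_eq_zero fun u _ => sum_eq_zero fun w _ => by split_ifs with h <;> simp [hs u w, h]
    linarith
  have hdeg : ∀ u, s u * H.degree u = ∑ w, if H.Adj u w then s u else 0 := by
    intro u
    rw [sum_ite, sum_const_zero, add_zero, sum_const, ← neighborFinset_eq_filter,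
      card_neighborFinset_eq_degree, nsmul_eq_mul, mul_comm]
  simp only [hdeg, ← sum_add_sum_compl X, sum_add_distrib, hinside, zero_add]

section Bipartite

variable {V : Type*} {G : SimpleGraph V} {A B : Set V}

open Classical in
noncomputable def colourSign (A : Set V) (v : V) : ℤ := if v ∈ A then 1 else -1

theorem odd_colourSign (A : Set V) (v : V) : Odd (colourSign A v) := by
  unfold colourSign
  split_ifs <;> decide

theorem colourSign_eq_colourSign_iff {u w : V} :
    colourSign A u = colourSign A w ↔ (u ∈ A ↔ w ∈ A) := by
  unfold colourSign
  split_ifs <;> simp_all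

theorem IsBipartition.mem_right_of_notMem_left (hAB : IsBipartition G A B) {v : V}
    (hv : v ∉ A) : v ∈ B :=
  ((Set.ext_iff.mp hAB.1 v).mpr trivial).resolve_left hv

theorem IsBipartition.colourSign_add_colourSign_of_adj (hAB : IsBipartition G A B) {u w : V}
    (h : G.Adj u w) : colourSign A u + colourSign A w = 0 := by
  obtain ⟨-, hdisj, hadj⟩ := hAB
  rcases hadj u w h with ⟨hu, hw⟩ | ⟨hu, hw⟩
  · simp [colourSign, hu, Set.disjoint_right.mp hdisj hw]
  · simp [colourSign, hw, Set.disjoint_right.mp hdisj hu]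

theorem IsTwoFactor.degree_spanningCoe {H : G.Subgraph} (hH : IsTwoFactor G H) (v : V)
    [Fintype (H.spanningCoe.neighborSet v)] : H.spanningCoe.degree v = 2 := by
  rw [← card_neighborSet_eq_degree, ← Nat.card_eq_fintype_card, Nat.card_coe_set_eq]
  exact hH.2 v

open scoped Classical in
theorem IsTwoFactor.sum_boundary_colourSign [Fintype V] [DecidableEq V] {H : G.Subgraph}
    (hH : IsTwoFactor G H) (hAB : IsBipartition G A B) (X : Finset V) :
    ∑ u ∈ X, ∑ w ∈ Xᶜ, (if H.Adj u w then colourSign A u else 0)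
      = 2 * ∑ u ∈ X, colourSign A u := by
  have h := H.spanningCoe.sum_mul_degree_eq_sum_boundary
    (fun u w h => hAB.colourSign_add_colourSign_of_adj (H.adj_sub h)) X
  simp only [hH.degree_spanningCoe, Subgraph.spanningCoe_adj] at h
  rw [← h, mul_sum]
  simp only [mul_comm, Nat.cast_ofNat]

end Bipartite

section StarProduct

variable {V V1 V2 : Type*} {G : SimpleGraph V} {G1 : SimpleGraph V1} {v1 : V1}
  {G2 : SimpleGraph V2} {v2 : V2} {f : V1 → V} {g : V2 → V} {m : V1 → V2}

theorem IsStarProductWitness.card_filter_adj [Fintype V1] [DecidableRel G1.Adj]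
    (hw : IsStarProductWitness G G1 v1 G2 v2 f g m) : #{x | G1.Adj v1 x} = 3 := by
  rw [← Set.ncard_coe_finset, coe_filter_univ]
  exact hw.1

theorem IsStarProductWitness.map_ne_of_adj (hw : IsStarProductWitness G G1 v1 G2 v2 f g m)
    {x : V1} (hx : G1.Adj v1 x) : m x ≠ v2 := by
  obtain ⟨-, -, -, -, -, -, hm, -⟩ := hw
  exact (hm.mapsTo hx : G2.Adj v2 (m x)).ne'

theorem IsStarProductWitness.principal_edge_injective
    (hw : IsStarProductWitness G G1 v1 G2 v2 f g m) {x y : V1} (hx : G1.Adj v1 x)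
    (hy : G1.Adj v1 y) (h : s(f x, g (m x)) = s(f y, g (m y))) : x = y := by
  have hmy := hw.map_ne_of_adj hy
  obtain ⟨-, -, hf, -, hfg, -⟩ := hw
  rcases Sym2.eq_iff.mp h with ⟨h, -⟩ | ⟨h, -⟩
  · exact hf hx.ne' hy.ne' h
  · exact absurd h (hfg x (m y) hx.ne' hmy)

variable [Fintype V1] [DecidableEq V1] [DecidableEq V]

def starProductSide (v1 : V1) (f : V1 → V) : Finset V :=
  (univ.erase v1).image f

theorem mem_starProductSide {u : V} :
    u ∈ starProductSide v1 f ↔ ∃ x, x ≠ v1 ∧ f x = u := by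
  simp [starProductSide]

theorem IsStarProductWitness.right_notMem_side (hw : IsStarProductWitness G G1 v1 G2 v2 f g m)
    {y : V2} (hy : y ≠ v2) : g y ∉ starProductSide v1 f := by
  rw [mem_starProductSide]
  rintro ⟨x, hx, hxy⟩
  obtain ⟨-, -, -, -, hfg, -⟩ := hw
  exact hfg x y hx hy hxy

theorem IsStarProductWitness.exists_principal_of_adj
    (hw : IsStarProductWitness G G1 v1 G2 v2 f g m) {u v : V}
    (hu : u ∈ starProductSide v1 f) (hv : v ∉ starProductSide v1 f) (h : G.Adj u v) :
    ∃ x, G1.Adj v1 x ∧ u = f x ∧ v = g (m x) := by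
  have hright : ∀ y, y ≠ v2 → g y ∉ starProductSide v1 f := fun _ => hw.right_notMem_side
  have hm : ∀ x, G1.Adj v1 x → m x ≠ v2 := fun _ => hw.map_ne_of_adj
  obtain ⟨-, -, -, -, -, -, -, hadj⟩ := hw
  rcases (hadj u v).mp h with ⟨x, y, -, hy, -, -, rfl⟩ | ⟨x, y, hx, -, -, rfl, -⟩ |
    ⟨x, hx, ⟨rfl, rfl⟩ | ⟨rfl, rfl⟩⟩
  · exact absurd (mem_starProductSide.mpr ⟨y, hy, rfl⟩) hv
  · exact absurd hu (hright x hx)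
  · exact ⟨x, hx, rfl, rfl⟩
  · exact absurd hu (hright _ (hm x hx))

open scoped Classical in
theorem IsStarProductWitness.sum_boundary_eq_sum_principal [Fintype V]
    (hw : IsStarProductWitness G G1 v1 G2 v2 f g m) (H : G.Subgraph) (s : V → ℤ) :
    ∑ u ∈ starProductSide v1 f, ∑ w ∈ (starProductSide v1 f)ᶜ,
        (if H.Adj u w then s u else 0)
      = ∑ x with G1.Adj v1 x ∧ H.Adj (f x) (g (m x)), s (f x) := by
  rw [← sum_product' (f := fun u w => if H.Adj u w then s u else 0), ← sum_filter]
  symm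
  refine sum_bij (fun x _ => (f x, g (m x))) ?_ ?_ ?_ fun _ _ => rfl
  · simp only [mem_filter, mem_univ, true_and, mem_product, mem_compl, and_imp]
    exact fun x hx hH => ⟨⟨mem_starProductSide.mpr ⟨x, hx.ne', rfl⟩,
      hw.right_notMem_side (hw.map_ne_of_adj hx)⟩, hH⟩
  · simp only [mem_filter, mem_univ, true_and, Prod.mk.injEq, and_imp]
    exact fun x hx _ y hy _ hfxy hgxy =>
      hw.principal_edge_injective hx hy (by rw [hfxy, hgxy])
  · simp only [mem_filter, mem_univ, true_and, mem_product, mem_compl, and_imp, Prod.forall]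
    intro u v hu hv hH
    obtain ⟨x, hx, rfl, rfl⟩ := hw.exists_principal_of_adj hu hv (H.adj_sub hH)
    exact ⟨x, ⟨hx, hH⟩, rfl⟩

open scoped Classical in
theorem IsStarProductWitness.colourSign_add_colourSign_eq [Fintype V]
    (hw : IsStarProductWitness G G1 v1 G2 v2 f g m) {A B : Set V} (hAB : IsBipartition G A B)
    {H : G.Subgraph} (hH : IsTwoFactor G H) {x y : V1} (hx : G1.Adj v1 x) (hy : G1.Adj v1 y)
    (hxy : x ≠ y) (hHx : H.Adj (f x) (g (m x))) (hHy : H.Adj (f y) (g (m y))) :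
    colourSign A (f x) + colourSign A (f y)
      = 2 * ∑ u ∈ starProductSide v1 f, colourSign A u := by
  have hsum := (hw.sum_boundary_eq_sum_principal H (colourSign A)).symm.trans
    (hH.sum_boundary_colourSign hAB _)
  set T : Finset V1 := {t | G1.Adj v1 t ∧ H.Adj (f t) (g (m t))}
  have hT : #T ≤ 3 :=
    hw.card_filter_adj ▸ card_le_card (monotone_filter_right _ fun _ _ => And.left)
  have hxyT : {x, y} ⊆ T := by
    simp only [insert_subset_iff, singleton_subset_iff, T, mem_filter, mem_univ, true_and]
    exact ⟨⟨hx, hHx⟩, hy, hHy⟩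
  obtain ⟨k, hk⟩ : Even #T :=
    (even_sum_iff_even_card_of_odd fun t _ => odd_colourSign A (f t)).mp (hsum ▸ even_two_mul _)
  have hTxy : T = {x, y} := by
    refine (eq_of_subset_of_card_le hxyT ?_).symm
    have := card_le_card hxyT
    rw [card_pair hxy] at this ⊢
    omega
  rwa [hTxy, sum_pair hxy] at hsum

end StarProduct

theorem principalCut_endpoints_same_colour_general {V V1 V2 : Type*}
    [Fintype V] [Fintype V1]
    (G : SimpleGraph V) (A B : Set V) (hAB : IsBipartition G A B)
    (G1 : SimpleGraph V1) (v1 : V1) (G2 : SimpleGraph V2) (v2 : V2)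
    (f : V1 → V) (g : V2 → V) (m : V1 → V2)
    (hw : IsStarProductWitness G G1 v1 G2 v2 f g m)
    (hpairs : ∀ e ∈ principalCut G1 v1 f g m, ∀ e' ∈ principalCut G1 v1 f g m, e ≠ e' →
      ∃ H : G.Subgraph, IsTwoFactor G H ∧ e ∈ H.edgeSet ∧ e' ∈ H.edgeSet) :
    (∀ x : V1, G1.Adj v1 x → f x ∈ A) ∨ (∀ x : V1, G1.Adj v1 x → f x ∈ B) := by
  classical
  have hpair : ∀ x ∈ ({x | G1.Adj v1 x} : Finset V1), ∀ y ∈ ({x | G1.Adj v1 x} : Finset V1),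
      x ≠ y → colourSign A (f x) + colourSign A (f y)
        = 2 * ∑ u ∈ starProductSide v1 f, colourSign A u := by
    simp only [mem_filter, mem_univ, true_and]
    intro x hx y hy hxy
    obtain ⟨H, hH, hHx, hHy⟩ := hpairs _ ⟨x, hx, rfl⟩ _ ⟨y, hy, rfl⟩
      fun h => hxy (hw.principal_edge_injective hx hy h)
    exact hw.colourSign_add_colourSign_eq hAB hH hx hy hxy hHx hHy
  have hconst := eq_of_pair_sums_eq hw.card_filter_adj.ge hpair
  simp only [mem_filter, mem_univ, true_and] at hconst
  by_cases hA : ∃ x, G1.Adj v1 x ∧ f x ∈ A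
  · obtain ⟨x₀, hx₀, hx₀A⟩ := hA
    exact .inl fun x hx => (colourSign_eq_colourSign_iff.mp (hconst x₀ hx₀ x hx)).mp hx₀A
  · push Not at hA
    exact .inr fun x hx => hAB.mem_right_of_notMem_left (hA x hx)

/-- Let `G` be a bipartite graph with colour classes `A` and `B` that
can be represented as the star product `(G1,v1)*(G2,v2)` with principal 3-edge cut `∂X`,
where `X = V(G1) \ {v1}`, and suppose that any two edges of `∂X` occur together in some
2-factor of `G`. Then the three endpoints lying in `X` of the edges of `∂X` (i.e. the
vertices `f x` for `x` a neighbour of `v1` in `G1`) all belong to the same colour class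
of `G`. -/
theorem principalCut_endpoints_same_colour {V V1 V2 : Type*}
    [Fintype V] [Fintype V1] [Fintype V2]
    (G : SimpleGraph V) (A B : Set V) (hAB : IsBipartition G A B)
    (G1 : SimpleGraph V1) (v1 : V1) (G2 : SimpleGraph V2) (v2 : V2)
    (f : V1 → V) (g : V2 → V) (m : V1 → V2)
    (hw : IsStarProductWitness G G1 v1 G2 v2 f g m)
    (hpairs : ∀ e ∈ principalCut G1 v1 f g m, ∀ e' ∈ principalCut G1 v1 f g m, e ≠ e' →
      ∃ H : G.Subgraph, IsTwoFactor G H ∧ e ∈ H.edgeSet ∧ e' ∈ H.edgeSet) :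
    (∀ x : V1, G1.Adj v1 x → f x ∈ A) ∨ (∀ x : V1, G1.Adj v1 x → f x ∈ B) :=
  principalCut_endpoints_same_colour_general G A B hAB G1 v1 G2 v2 f g m hw hpairs
end
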